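/- arXiv:1202.5599 — 10 statements merged into one kernel-verified Lean document; each statement's English description precedes it below -/
import Mathlib

section
/- Let G be a finite group with subgroups G₁, G₂, G₃, G₄. If the set products satisfy G₁G₂ = G₂G₁ (equivalently, the set G₁G₂ = {xy : x ∈ G₁, y ∈ G₂} is a subgroup of G), then the Ingleton inequality holds: |G₁|·|G₂|·|G₃₄|·|G₁₂₃|·|G₁₂₄| ≥ |G₁₂|·|G₁₃|·|G₁₄|·|G₂₃|·|G₂₄|. -/
open scoped Pointwise

/-!
Since `G₁G₂ = G₂G₁`, the set `K = G₁G₂` is the subgroup `G₁ ⊔ G₂`, and the product formula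
`|AB| |A ∩ B| = |A| |B|` gives `|K| |G₁₂| = |G₁| |G₂|`. The same formula, applied to products of
subgroups landing inside a known subgroup, gives `|G₁₃| |G₂₃| ≤ |K ∩ G₃| |G₁₂₃|`,
`|G₁₄| |G₂₄| ≤ |K ∩ G₄| |G₁₂₄|` and `|K ∩ G₃| |K ∩ G₄| ≤ |K| |G₃₄|`; multiplying these and
substituting `|K| |G₁₂|` yields the Ingleton inequality.
-/

namespace Subgroup

variable {G : Type*} [Group G]

theorem coe_sup_eq_mul_of_mul_comm {H K : Subgroup G} (h : (H : Set G) * K = K * H) :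
    ((H ⊔ K : Subgroup G) : Set G) = H * K := by
  let L : Subgroup G :=
    { carrier := H * K
      one_mem' := ⟨1, H.one_mem, 1, K.one_mem, one_mul 1⟩
      mul_mem' := by
        rintro _ _ ⟨a, ha, b, hb, rfl⟩ ⟨c, hc, d, hd, rfl⟩
        obtain ⟨c', hc', b', hb', hbc⟩ : b * c ∈ (H : Set G) * K := h ▸ Set.mul_mem_mul hb hc
        refine ⟨a * c', H.mul_mem ha hc', b' * d, K.mul_mem hb' hd, ?_⟩
        calc a * c' * (b' * d) = a * (c' * b') * d := by group
          _ = a * b * (c * d) := by rw [show c' * b' = b * c from hbc]; group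
      inv_mem' := by
        rintro _ ⟨a, ha, b, hb, rfl⟩
        rw [mul_inv_rev, h]
        exact Set.mul_mem_mul (K.inv_mem hb) (H.inv_mem ha) }
  have hL : H ⊔ K = L := by
    refine le_antisymm (sup_le (fun a ha => ?_) fun b hb => ?_) ?_
    · exact ⟨a, ha, 1, K.one_mem, mul_one a⟩
    · exact ⟨1, H.one_mem, b, hb, one_mul b⟩
    · rw [sup_eq_closure_mul]
      exact subset_closure
  rw [hL]
  rfl

theorem card_image_mk_eq_relIndex (A B : Subgroup G) :
    Nat.card ((↑) '' (A : Set G) : Set (G ⧸ B)) = B.relIndex A := by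
  have hsmul (a : A) : a • ((1 : G) : G ⧸ B) = ((a : G) : G ⧸ B) := congrArg _ (mul_one (a : G))
  have horbit : ((↑) '' (A : Set G) : Set (G ⧸ B)) = MulAction.orbit A ((1 : G) : G ⧸ B) := by
    ext x
    simp [MulAction.mem_orbit_iff, hsmul]
  have hstab : MulAction.stabilizer A ((1 : G) : G ⧸ B) = B.subgroupOf A := by
    ext a
    simp [mem_subgroupOf, MulAction.mem_stabilizer_iff, hsmul, QuotientGroup.eq]
  rw [relIndex, ← hstab, MulAction.index_stabilizer, horbit, Nat.card_coe_set_eq]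

theorem card_mul_mul_card_inf (A B : Subgroup G) :
    Nat.card ((A : Set G) * (B : Set G)) * Nat.card (A ⊓ B : Subgroup G) =
      Nat.card A * Nat.card B := by
  have hinf : Nat.card (B.subgroupOf A) = Nat.card (A ⊓ B : Subgroup G) := by
    rw [← card_map_of_injective A.subtype_injective, subgroupOf_map_subtype, inf_comm]
  rw [card_mul_eq_card_subgroup_mul_card_quotient, card_image_mk_eq_relIndex, ← hinf, relIndex,
    mul_assoc, index_mul_card, mul_comm]

theorem card_mul_card_le_of_mul_subset {A B C : Subgroup G} [Finite C]
    (h : (A : Set G) * (B : Set G) ⊆ C) :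
    Nat.card A * Nat.card B ≤ Nat.card C * Nat.card (A ⊓ B : Subgroup G) := by
  rw [← card_mul_mul_card_inf]
  exact Nat.mul_le_mul_right _ (Nat.card_mono (Set.toFinite _) h)

variable [Finite G]

theorem card_inf_mul_card_inf_le (A B C : Subgroup G) :
    Nat.card (A ⊓ C : Subgroup G) * Nat.card (B ⊓ C : Subgroup G) ≤
      Nat.card ((A ⊔ B) ⊓ C : Subgroup G) * Nat.card (A ⊓ B ⊓ C : Subgroup G) := by
  rw [inf_inf_distrib_right]
  refine card_mul_card_le_of_mul_subset ?_
  rintro _ ⟨a, ha, b, hb, rfl⟩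
  exact ⟨mul_mem (mem_sup_left ha.1) (mem_sup_right hb.1), mul_mem ha.2 hb.2⟩

theorem card_inf_mul_card_inf_le_card_mul_card_inf (K C D : Subgroup G) :
    Nat.card (K ⊓ C : Subgroup G) * Nat.card (K ⊓ D : Subgroup G) ≤
      Nat.card K * Nat.card (C ⊓ D : Subgroup G) :=
  calc _ ≤ Nat.card K * Nat.card ((K ⊓ C) ⊓ (K ⊓ D) : Subgroup G) :=
        card_mul_card_le_of_mul_subset (mul_subset inf_le_left inf_le_left)
    _ ≤ Nat.card K * Nat.card (C ⊓ D : Subgroup G) :=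
        Nat.mul_le_mul_left _ (card_le_of_le (inf_le_inf inf_le_right inf_le_right))

end Subgroup

theorem ingleton_of_bounds {a b k d p q r s t u v m n : ℕ} (hk : k * r = a * b)
    (h₃ : s * u ≤ m * p) (h₄ : t * v ≤ n * q) (h₃₄ : m * n ≤ k * d) :
    a * b * d * p * q ≥ r * s * t * u * v :=
  calc r * s * t * u * v = r * (s * u) * (t * v) := by ring
    _ ≤ r * (m * p) * (n * q) := by gcongr
    _ = m * n * (r * p * q) := by ring
    _ ≤ k * d * (r * p * q) := by gcongr
    _ = a * b * d * p * q := by rw [← hk]; ring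

/-- If the set product of `G₁` and `G₂` commutes (equivalently, `G₁G₂` is a subgroup),
then the Ingleton inequality holds for `(G₁, G₂, G₃, G₄)`. -/
theorem stmt2 (G : Type*) [Group G] [Finite G] (G₁ G₂ G₃ G₄ : Subgroup G)
    (h : (G₁ : Set G) * (G₂ : Set G) = (G₂ : Set G) * (G₁ : Set G)) :
    Nat.card G₁ * Nat.card G₂ * Nat.card (G₃ ⊓ G₄ : Subgroup G) *
        Nat.card (G₁ ⊓ G₂ ⊓ G₃ : Subgroup G) * Nat.card (G₁ ⊓ G₂ ⊓ G₄ : Subgroup G) ≥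
      Nat.card (G₁ ⊓ G₂ : Subgroup G) * Nat.card (G₁ ⊓ G₃ : Subgroup G) *
        Nat.card (G₁ ⊓ G₄ : Subgroup G) * Nat.card (G₂ ⊓ G₃ : Subgroup G) *
        Nat.card (G₂ ⊓ G₄ : Subgroup G) := by
  have hK : Nat.card (G₁ ⊔ G₂ : Subgroup G) * Nat.card (G₁ ⊓ G₂ : Subgroup G) =
      Nat.card G₁ * Nat.card G₂ := by
    rw [← Subgroup.card_mul_mul_card_inf G₁ G₂, ← Subgroup.coe_sup_eq_mul_of_mul_comm h]
    rfl
  have h₃ := Subgroup.card_inf_mul_card_inf_le G₁ G₂ G₃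
  have h₄ := Subgroup.card_inf_mul_card_inf_le G₁ G₂ G₄
  have h₃₄ := Subgroup.card_inf_mul_card_inf_le_card_mul_card_inf (G₁ ⊔ G₂) G₃ G₄
  exact ingleton_of_bounds hK h₃ h₄ h₃₄
end

section
/- Let G be a finite group with subgroups G₁, G₂, G₃, G₄. If G₁ ∩ G₂ is the trivial subgroup, then the Ingleton inequality holds: |G₁|·|G₂|·|G₃₄|·|G₁₂₃|·|G₁₂₄| ≥ |G₁₂|·|G₁₃|·|G₁₄|·|G₂₃|·|G₂₄|. -/
/-!
Since `G₁ ∩ G₂` is trivial, so are `G₁₂₃` and `G₁₂₄`, and the inequality reduces to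
`|G₁₃| |G₁₄| |G₂₃| |G₂₄| ≤ |G₁| |G₂| |G₃₄|`. This follows from the product bound
`|A| |B| ≤ |H| |A ∩ B|` for subgroups `A, B ≤ H` (equivalently `[A : A ∩ B] ≤ [H : B]`),
applied to `G₁₃, G₁₄ ≤ G₁` and `G₂₃, G₂₄ ≤ G₂`, and then to the subgroups
`G₁ ∩ G₃₄` and `G₂ ∩ G₃₄` of `G₃₄`, which intersect trivially.
-/

namespace Subgroup

variable {G : Type*} [Group G]

theorem card_mul_relIndex {H K : Subgroup G} (hKH : K ≤ H) :
    Nat.card K * K.relIndex H = Nat.card H := by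
  rw [← relIndex_bot_left, ← relIndex_bot_left, relIndex_mul_relIndex _ _ _ bot_le hKH]

theorem card_mul_card_le_card_mul_card_inf {H A B : Subgroup G} [Finite H]
    (hA : A ≤ H) (hB : B ≤ H) :
    Nat.card A * Nat.card B ≤ Nat.card H * Nat.card (A ⊓ B : Subgroup G) := by
  have hAB : Nat.card (A ⊓ B : Subgroup G) * B.relIndex A = Nat.card A := by
    rw [← inf_relIndex_right B A, inf_comm B A, card_mul_relIndex inf_le_left]
  have hBH : Nat.card B * B.relIndex H = Nat.card H := card_mul_relIndex hB
  have hH : B.relIndex H ≠ 0 := right_ne_zero_of_mul (hBH ▸ Nat.card_pos.ne')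
  calc Nat.card A * Nat.card B
      = Nat.card (A ⊓ B : Subgroup G) * (Nat.card B * B.relIndex A) := by rw [← hAB]; ring
    _ ≤ Nat.card (A ⊓ B : Subgroup G) * (Nat.card B * B.relIndex H) := by
        gcongr; exact relIndex_le_of_le_right hA hH
    _ = Nat.card H * Nat.card (A ⊓ B : Subgroup G) := by rw [hBH, mul_comm]

end Subgroup

open Subgroup

/-- If `G₁ ∩ G₂` is the trivial subgroup, then the Ingleton inequality holds
for `(G₁, G₂, G₃, G₄)`. -/
theorem stmt3 (G : Type*) [Group G] [Finite G] (G₁ G₂ G₃ G₄ : Subgroup G)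
    (h : G₁ ⊓ G₂ = ⊥) :
    Nat.card G₁ * Nat.card G₂ * Nat.card (G₃ ⊓ G₄ : Subgroup G) *
        Nat.card (G₁ ⊓ G₂ ⊓ G₃ : Subgroup G) * Nat.card (G₁ ⊓ G₂ ⊓ G₄ : Subgroup G) ≥
      Nat.card (G₁ ⊓ G₂ : Subgroup G) * Nat.card (G₁ ⊓ G₃ : Subgroup G) *
        Nat.card (G₁ ⊓ G₄ : Subgroup G) * Nat.card (G₂ ⊓ G₃ : Subgroup G) *
        Nat.card (G₂ ⊓ G₄ : Subgroup G) := by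
  have h₁ := card_mul_card_le_card_mul_card_inf (H := G₁) (A := G₁ ⊓ G₃) (B := G₁ ⊓ G₄)
    inf_le_left inf_le_left
  have h₂ := card_mul_card_le_card_mul_card_inf (H := G₂) (A := G₂ ⊓ G₃) (B := G₂ ⊓ G₄)
    inf_le_left inf_le_left
  have h₃₄ := card_mul_card_le_card_mul_card_inf (H := G₃ ⊓ G₄) (A := G₁ ⊓ (G₃ ⊓ G₄))
    (B := G₂ ⊓ (G₃ ⊓ G₄)) inf_le_right inf_le_right
  rw [← inf_inf_distrib_left] at h₁ h₂
  rw [eq_bot_mono (inf_le_inf inf_le_left inf_le_left) h, card_bot, mul_one] at h₃₄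
  simp only [h, bot_inf_eq, card_bot, mul_one, one_mul, ge_iff_le]
  calc Nat.card (G₁ ⊓ G₃ : Subgroup G) * Nat.card (G₁ ⊓ G₄ : Subgroup G) *
        Nat.card (G₂ ⊓ G₃ : Subgroup G) * Nat.card (G₂ ⊓ G₄ : Subgroup G)
      ≤ Nat.card G₁ * Nat.card (G₁ ⊓ (G₃ ⊓ G₄) : Subgroup G) *
        (Nat.card G₂ * Nat.card (G₂ ⊓ (G₃ ⊓ G₄) : Subgroup G)) := by
        rw [mul_assoc _ (Nat.card (G₂ ⊓ G₃ : Subgroup G))]; exact Nat.mul_le_mul h₁ h₂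
    _ = Nat.card G₁ * Nat.card G₂ *
        (Nat.card (G₁ ⊓ (G₃ ⊓ G₄) : Subgroup G) * Nat.card (G₂ ⊓ (G₃ ⊓ G₄) : Subgroup G)) := by
        ring
    _ ≤ Nat.card G₁ * Nat.card G₂ * Nat.card (G₃ ⊓ G₄ : Subgroup G) := by gcongr
end

section
/- In the symmetric group S₅ on {1,2,3,4,5}, define the subgroups G₁ = ⟨(3,4,5), (1,2)(4,5)⟩, G₂ = ⟨(1,2,3,4,5), (1,4,3,5)⟩, G₃ = ⟨(2,3), (1,3,4,2)⟩, and G₄ = ⟨(2,4), (1,2,5,4)⟩ (permutations written in cycle notation). Then |G₁|·|G₂|·|G₃₄|·|G₁₂₃|·|G₁₂₄| = 120 and |G₁₂|·|G₁₃|·|G₁₄|·|G₂₃|·|G₂₄| = 128; in particular, (G₁,G₂,G₃,G₄) violates the Ingleton inequality |G₁|·|G₂|·|G₃₄|·|G₁₂₃|·|G₁₂₄| ≥ |G₁₂|·|G₁₃|·|G₁₄|·|G₂₃|·|G₂₄|. -/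
/-!
In a finite group inverses are positive powers, so the subgroup generated by a finite set `S` is
the set of products of at most `n` elements of `S` as soon as allowing `n + 1` factors yields
nothing new: `(insert 1 S) ^ (n + 1) = (insert 1 S) ^ n`. For `G₁, G₂, G₃, G₄` this happens at
`n = 2, 4, 3, 3`, after which all orders are finite computations: `|G₁| = 6`, `|G₂| = 20`,
`|G₃₄| = |G₁₂₃| = |G₁₂₄| = 1`, `|G₁₂| = |G₁₃| = |G₁₄| = 2` and `|G₂₃| = |G₂₄| = 4`.
-/

open Equiv Pointwise

theorem pow_add_eq_of_pow_succ_eq {M : Type*} [Monoid M] {a : M} {n : ℕ}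
    (h : a ^ (n + 1) = a ^ n) (k : ℕ) : a ^ (n + k) = a ^ n := by
  induction k with
  | zero => rfl
  | succ k ih => rw [← add_assoc, pow_succ, ih, ← pow_succ, h]

namespace Submonoid

variable {M : Type*} [Monoid M] {s : Set M} {n : ℕ}

theorem coe_closure_eq_pow_of_pow_succ_eq (hs : 1 ∈ s) (h : s ^ (n + 1) = s ^ n) :
    (closure s : Set M) = s ^ n := by
  refine subset_antisymm (fun x hx => ?_) (pow_subset subset_closure)
  induction hx using closure_induction with
  | mem x hx => exact h ▸ Set.subset_pow hs n.succ_ne_zero hx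
  | one => exact Set.one_mem_pow hs
  | mul x y _ _ hx hy =>
    rw [← pow_add_eq_of_pow_succ_eq h n, pow_add]
    exact Set.mul_mem_mul hx hy

end Submonoid

namespace Subgroup

variable {G : Type*} [Group G] [Finite G]

theorem coe_closure_eq_pow_of_pow_succ_eq {s : Set G} {n : ℕ} (hs : 1 ∈ s)
    (h : s ^ (n + 1) = s ^ n) : (closure s : Set G) = s ^ n := by
  rw [← coe_toSubmonoid, closure_toSubmonoid_of_finite,
    Submonoid.coe_closure_eq_pow_of_pow_succ_eq hs h]

theorem coe_closure_finset_eq_insert_one_pow [DecidableEq G] {S : Finset G} {n : ℕ}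
    (h : insert 1 S ^ (n + 1) = insert 1 S ^ n) :
    (closure (S : Set G) : Set G) = ↑(insert 1 S ^ n) := by
  have h' := congrArg ((↑) : Finset G → Set G) h
  simp only [Finset.coe_pow, Finset.coe_insert] at h' ⊢
  rw [← closure_insert_one, coe_closure_eq_pow_of_pow_succ_eq (Set.mem_insert _ _) h']

end Subgroup

/-- The four explicit subgroups of `S₅` (in cycle notation:
`G₁ = ⟨(3,4,5), (1,2)(4,5)⟩`, `G₂ = ⟨(1,2,3,4,5), (1,4,3,5)⟩`,
`G₃ = ⟨(2,3), (1,3,4,2)⟩`, `G₄ = ⟨(2,4), (1,2,5,4)⟩`, written here on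
`{0,…,4}` instead of `{1,…,5}`) give `120 < 128` in the Ingleton inequality,
hence violate it. -/
theorem stmt5
    (G₁ G₂ G₃ G₄ : Subgroup (Equiv.Perm (Fin 5)))
    (h₁ : G₁ = Subgroup.closure {c[(2 : Fin 5), 3, 4], c[(0 : Fin 5), 1] * c[(3 : Fin 5), 4]})
    (h₂ : G₂ = Subgroup.closure {c[(0 : Fin 5), 1, 2, 3, 4], c[(0 : Fin 5), 3, 2, 4]})
    (h₃ : G₃ = Subgroup.closure {c[(1 : Fin 5), 2], c[(0 : Fin 5), 2, 3, 1]})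
    (h₄ : G₄ = Subgroup.closure {c[(1 : Fin 5), 3], c[(0 : Fin 5), 1, 4, 3]}) :
    Nat.card G₁ * Nat.card G₂ * Nat.card (G₃ ⊓ G₄ : Subgroup (Equiv.Perm (Fin 5))) *
        Nat.card (G₁ ⊓ G₂ ⊓ G₃ : Subgroup (Equiv.Perm (Fin 5))) *
        Nat.card (G₁ ⊓ G₂ ⊓ G₄ : Subgroup (Equiv.Perm (Fin 5))) = 120 ∧
      Nat.card (G₁ ⊓ G₂ : Subgroup (Equiv.Perm (Fin 5))) *
        Nat.card (G₁ ⊓ G₃ : Subgroup (Equiv.Perm (Fin 5))) *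
        Nat.card (G₁ ⊓ G₄ : Subgroup (Equiv.Perm (Fin 5))) *
        Nat.card (G₂ ⊓ G₃ : Subgroup (Equiv.Perm (Fin 5))) *
        Nat.card (G₂ ⊓ G₄ : Subgroup (Equiv.Perm (Fin 5))) = 128 ∧
      ¬(Nat.card G₁ * Nat.card G₂ * Nat.card (G₃ ⊓ G₄ : Subgroup (Equiv.Perm (Fin 5))) *
          Nat.card (G₁ ⊓ G₂ ⊓ G₃ : Subgroup (Equiv.Perm (Fin 5))) *
          Nat.card (G₁ ⊓ G₂ ⊓ G₄ : Subgroup (Equiv.Perm (Fin 5))) ≥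
        Nat.card (G₁ ⊓ G₂ : Subgroup (Equiv.Perm (Fin 5))) *
          Nat.card (G₁ ⊓ G₃ : Subgroup (Equiv.Perm (Fin 5))) *
          Nat.card (G₁ ⊓ G₄ : Subgroup (Equiv.Perm (Fin 5))) *
          Nat.card (G₂ ⊓ G₃ : Subgroup (Equiv.Perm (Fin 5))) *
          Nat.card (G₂ ⊓ G₄ : Subgroup (Equiv.Perm (Fin 5)))) := by
  subst h₁ h₂ h₃ h₄
  have e₁ := Subgroup.coe_closure_finset_eq_insert_one_pow (n := 2)
    (S := {c[(2 : Fin 5), 3, 4], c[(0 : Fin 5), 1] * c[(3 : Fin 5), 4]}) (by decide +kernel)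
  have e₂ := Subgroup.coe_closure_finset_eq_insert_one_pow (n := 4)
    (S := {c[(0 : Fin 5), 1, 2, 3, 4], c[(0 : Fin 5), 3, 2, 4]}) (by decide +kernel)
  have e₃ := Subgroup.coe_closure_finset_eq_insert_one_pow (n := 3)
    (S := {c[(1 : Fin 5), 2], c[(0 : Fin 5), 2, 3, 1]}) (by decide +kernel)
  have e₄ := Subgroup.coe_closure_finset_eq_insert_one_pow (n := 3)
    (S := {c[(1 : Fin 5), 3], c[(0 : Fin 5), 1, 4, 3]}) (by decide +kernel)
  simp only [Finset.coe_insert, Finset.coe_singleton] at e₁ e₂ e₃ e₄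
  simp only [← SetLike.coe_sort_coe, Nat.card_coe_set_eq, Subgroup.coe_inf, e₁, e₂, e₃, e₄,
    ← Finset.coe_inter, Set.ncard_coe_finset]
  decide +kernel
end

section
/- Let p be an odd prime and let t be a primitive root modulo p (a generator of the multiplicative group (ℤ/pℤ)ˣ). Consider the matrices A = [[1,0],[1,1]], B = [[1,0],[0,t]], C = [[0,1],[-1,-1]] in GL(2, 𝔽_p). Then the images Ā, B̄, C̄ of A, B, C in PGL(2,p) = GL(2,𝔽_p)/Z, where Z is the center of GL(2,𝔽_p) (the nonzero scalar matrices), generate the whole group PGL(2,p). -/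
/-!
Modulo the centre it suffices to show that `⟨A, B, C⟩` together with the scalars is all of
`GL(2, 𝔽_p)`. Every invertible matrix is a product of transvections and an invertible diagonal
matrix. The powers of `A` give every lower transvection, since `𝔽_p` is additively generated
by `1`; conjugating them by `AC = [[0,1],[-1,0]]` gives every upper one. Since `t` generates
`𝔽_pˣ`, the powers of `B` give every `diag(1, u)`, and a scalar multiple of these gives every
invertible diagonal matrix.
-/

namespace Matrix

theorem fin_two_lower_one_pow {R : Type*} [CommRing R] (n : ℕ) :
    (!![1, 0; 1, 1] : Matrix (Fin 2) (Fin 2) R) ^ n = !![1, 0; (n : R), 1] := by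
  induction n with
  | zero => simp [one_fin_two]
  | succ n ih => rw [pow_succ, ih, mul_fin_two]; simp

theorem fin_two_diag_one_pow {R : Type*} [CommRing R] (a : R) (n : ℕ) :
    (!![1, 0; 0, a] : Matrix (Fin 2) (Fin 2) R) ^ n = !![1, 0; 0, a ^ n] := by
  induction n with
  | zero => simp [one_fin_two]
  | succ n ih => rw [pow_succ, ih, mul_fin_two]; simp [pow_succ]

end Matrix

namespace Matrix.GeneralLinearGroup

theorem eq_top_of_diagonal_transvection {n 𝕜 : Type*} [Fintype n] [DecidableEq n] [Field 𝕜]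
    (K : Subgroup (GL n 𝕜))
    (hdiag : ∀ D : n → 𝕜, Matrix.det (diagonal D) ≠ 0 → ∃ g ∈ K, (g : Matrix n n 𝕜) = diagonal D)
    (htransvec : ∀ t : TransvectionStruct n 𝕜, ∃ g ∈ K, (g : Matrix n n 𝕜) = t.toMatrix) :
    K = ⊤ := by
  refine (Subgroup.eq_top_iff' K).2 fun g => ?_
  obtain ⟨g', hg'K, hg'⟩ :=
    diagonal_transvection_induction_of_det_ne_zero (fun M => ∃ g ∈ K, (g : Matrix n n 𝕜) = M)
      (g : Matrix n n 𝕜) (isUnit_iff_isUnit_det _ |>.1 g.isUnit).ne_zero hdiag htransvec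
      fun _ _ _ _ ⟨a, haK, ha⟩ ⟨b, hbK, hb⟩ => ⟨a * b, mul_mem haK hbK, by simp [ha, hb]⟩
  exact Units.ext hg' ▸ hg'K

section FinTwo

theorem coe_mul_mul_inv_eq_fin_two {R : Type*} [CommRing R] (w e : GL (Fin 2) R) (c : R)
    (hw : (w : Matrix (Fin 2) (Fin 2) R) = !![0, 1; -1, 0])
    (he : (e : Matrix (Fin 2) (Fin 2) R) = !![1, 0; -c, 1]) :
    ((w * e * w⁻¹ : GL (Fin 2) R) : Matrix (Fin 2) (Fin 2) R) = !![1, c; 0, 1] := by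
  rw [Units.val_mul, Units.val_mul, coe_units_inv, hw, he, inv_def, adjugate_fin_two, det_fin_two]
  simp

variable {𝕜 : Type*} [Field 𝕜]

theorem _root_.Matrix.TransvectionStruct.toMatrix_fin_two (t : TransvectionStruct (Fin 2) 𝕜) :
    t.toMatrix = !![1, t.c; 0, 1] ∨ t.toMatrix = !![1, 0; t.c, 1] := by
  obtain ⟨i, j, hij, c⟩ := t
  fin_cases i <;> fin_cases j <;> simp at hij <;>
    [left; right] <;>
    ext a b <;> fin_cases a <;> fin_cases b <;> simp [transvection, single]

theorem eq_top_of_fin_two (K : Subgroup (GL (Fin 2) 𝕜)) (hcenter : Subgroup.center _ ≤ K)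
    (hdiag : ∀ u : 𝕜ˣ, ∃ g ∈ K, (g : Matrix (Fin 2) (Fin 2) 𝕜) = !![1, 0; 0, (u : 𝕜)])
    (hupper : ∀ c : 𝕜, ∃ g ∈ K, (g : Matrix (Fin 2) (Fin 2) 𝕜) = !![1, c; 0, 1])
    (hlower : ∀ c : 𝕜, ∃ g ∈ K, (g : Matrix (Fin 2) (Fin 2) 𝕜) = !![1, 0; c, 1]) :
    K = ⊤ := by
  refine eq_top_of_diagonal_transvection K (fun D hD => ?_) fun t => ?_
  · rw [det_diagonal, Fin.prod_univ_two] at hD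
    have hD0 : D 0 ≠ 0 := left_ne_zero_of_mul hD
    have hD1 : D 1 ≠ 0 := right_ne_zero_of_mul hD
    obtain ⟨g, hgK, hg⟩ := hdiag (Units.mk0 (D 1 / D 0) (div_ne_zero hD1 hD0))
    have hscalar : scalar (Fin 2) (Units.mk0 (D 0) hD0) ∈ K :=
      hcenter <| center_eq_range_scalar (n := Fin 2) (R := 𝕜) ▸ ⟨_, rfl⟩
    refine ⟨_, mul_mem hscalar hgK, ?_⟩
    rw [Units.val_mul, hg, coe_scalar]
    ext i j
    fin_cases i <;> fin_cases j <;> simp [field]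
  · rcases t.toMatrix_fin_two with h | h <;> rw [h]
    exacts [hupper t.c, hlower t.c]

end FinTwo

end Matrix.GeneralLinearGroup

open Matrix GeneralLinearGroup in
theorem ZMod.closure_sup_center_eq_top {p : ℕ} [Fact p.Prime]
    (t : (ZMod p)ˣ) (ht : ∀ x : (ZMod p)ˣ, x ∈ Subgroup.zpowers t)
    (A B C : GL (Fin 2) (ZMod p))
    (hA : (A : Matrix (Fin 2) (Fin 2) (ZMod p)) = !![1, 0; 1, 1])
    (hB : (B : Matrix (Fin 2) (Fin 2) (ZMod p)) = !![1, 0; 0, (t : ZMod p)])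
    (hC : (C : Matrix (Fin 2) (Fin 2) (ZMod p)) = !![0, 1; -1, -1]) :
    Subgroup.closure {A, B, C} ⊔ Subgroup.center _ = ⊤ := by
  set K := Subgroup.closure {A, B, C} ⊔ Subgroup.center _
  have hAK : A ∈ K := Subgroup.mem_sup_left (Subgroup.subset_closure (by simp))
  have hBK : B ∈ K := Subgroup.mem_sup_left (Subgroup.subset_closure (by simp))
  have hCK : C ∈ K := Subgroup.mem_sup_left (Subgroup.subset_closure (by simp))
  have hlower (c : ZMod p) : ∃ g ∈ K, (g : Matrix (Fin 2) (Fin 2) (ZMod p)) = !![1, 0; c, 1] :=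
    ⟨A ^ c.val, pow_mem hAK _, by
      rw [Units.val_pow_eq_pow_val, hA, fin_two_lower_one_pow, ZMod.natCast_zmod_val]⟩
  have hw : ((A * C : GL (Fin 2) (ZMod p)) : Matrix (Fin 2) (Fin 2) (ZMod p)) =
      !![0, 1; -1, 0] := by simp [hA, hC]
  refine eq_top_of_fin_two K le_sup_right (fun u => ?_) (fun c => ?_) hlower
  · obtain ⟨n, rfl⟩ := mem_powers_iff_mem_zpowers.2 (ht u)
    exact ⟨B ^ n, pow_mem hBK n, by simp [hB, fin_two_diag_one_pow]⟩
  · obtain ⟨e, heK, he⟩ := hlower (-c)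
    exact ⟨_, mul_mem (mul_mem (mul_mem hAK hCK) heK) (inv_mem (mul_mem hAK hCK)),
      coe_mul_mul_inv_eq_fin_two _ e c hw he⟩

theorem stmt6_general (p : ℕ) [Fact p.Prime]
    (t : (ZMod p)ˣ) (ht : ∀ x : (ZMod p)ˣ, x ∈ Subgroup.zpowers t)
    (A B C : GL (Fin 2) (ZMod p))
    (hA : (A : Matrix (Fin 2) (Fin 2) (ZMod p)) = !![1, 0; 1, 1])
    (hB : (B : Matrix (Fin 2) (Fin 2) (ZMod p)) = !![1, 0; 0, (t : ZMod p)])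
    (hC : (C : Matrix (Fin 2) (Fin 2) (ZMod p)) = !![0, 1; -1, -1]) :
    Subgroup.closure
        ({QuotientGroup.mk' (Subgroup.center (GL (Fin 2) (ZMod p))) A,
          QuotientGroup.mk' (Subgroup.center (GL (Fin 2) (ZMod p))) B,
          QuotientGroup.mk' (Subgroup.center (GL (Fin 2) (ZMod p))) C} :
          Set (GL (Fin 2) (ZMod p) ⧸ Subgroup.center (GL (Fin 2) (ZMod p)))) = ⊤ := by
  set f := QuotientGroup.mk' (Subgroup.center (GL (Fin 2) (ZMod p)))
  have himage : ({f A, f B, f C} : Set _) = f '' {A, B, C} := by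
    simp only [Set.image_insert_eq, Set.image_singleton]
  rw [himage, ← MonoidHom.map_closure]
  apply Subgroup.comap_injective (QuotientGroup.mk'_surjective _)
  rw [QuotientGroup.comap_map_mk', Subgroup.comap_top, sup_comm]
  exact ZMod.closure_sup_center_eq_top t ht A B C hA hB hC

/-- For an odd prime `p` and a primitive root `t` modulo `p`, the images of
`A = [[1,0],[1,1]]`, `B = [[1,0],[0,t]]`, `C = [[0,1],[-1,-1]]` in
`PGL(2,p) = GL(2,𝔽_p) ⧸ center` generate the whole group `PGL(2,p)`. -/
theorem stmt6 (p : ℕ) [Fact p.Prime] (hp : Odd p)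
    (t : (ZMod p)ˣ) (ht : ∀ x : (ZMod p)ˣ, x ∈ Subgroup.zpowers t)
    (A B C : GL (Fin 2) (ZMod p))
    (hA : (A : Matrix (Fin 2) (Fin 2) (ZMod p)) = !![1, 0; 1, 1])
    (hB : (B : Matrix (Fin 2) (Fin 2) (ZMod p)) = !![1, 0; 0, (t : ZMod p)])
    (hC : (C : Matrix (Fin 2) (Fin 2) (ZMod p)) = !![0, 1; -1, -1]) :
    Subgroup.closure
        ({QuotientGroup.mk' (Subgroup.center (GL (Fin 2) (ZMod p))) A,
          QuotientGroup.mk' (Subgroup.center (GL (Fin 2) (ZMod p))) B,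
          QuotientGroup.mk' (Subgroup.center (GL (Fin 2) (ZMod p))) C} :
          Set (GL (Fin 2) (ZMod p) ⧸ Subgroup.center (GL (Fin 2) (ZMod p)))) = ⊤ :=
  stmt6_general p t ht A B C hA hB hC
end

section
/- Let G be a finite group with a normal subgroup N, and let π : G → G/N be the natural quotient homomorphism. If H₁, H₂, H₃, H₄ are subgroups of G/N that violate the Ingleton inequality (i.e., |H₁|·|H₂|·|H₃₄|·|H₁₂₃|·|H₁₂₄| < |H₁₂|·|H₁₃|·|H₁₄|·|H₂₃|·|H₂₄|), then the preimages G_i = π⁻¹(H_i), i = 1,2,3,4, are subgroups of G that also violate the Ingleton inequality: |G₁|·|G₂|·|G₃₄|·|G₁₂₃|·|G₁₂₄| < |G₁₂|·|G₁₃|·|G₁₄|·|G₂₃|·|G₂₄|. -/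
/-! Each preimage `π⁻¹(H)` is a union of `|H|` cosets of `N`, so `|π⁻¹(H)| = |N|·|H|`, and
preimages commute with intersections. Both sides of the Ingleton inequality for the `Gᵢ` are
therefore those for the `Hᵢ` multiplied by `|N|⁵ > 0`. -/

theorem QuotientGroup.card_comap_mk' {G : Type*} [Group G] (N : Subgroup G) [N.Normal]
    (H : Subgroup (G ⧸ N)) :
    Nat.card (H.comap (QuotientGroup.mk' N)) = Nat.card N * Nat.card H :=
  QuotientGroup.card_preimage_mk N H

/-- If subgroups `H₁, H₂, H₃, H₄` of a quotient `G ⧸ N` violate the Ingleton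
inequality, then so do their preimages under the natural homomorphism. -/
theorem stmt9 (G : Type*) [Group G] [Finite G] (N : Subgroup G) [N.Normal]
    (H₁ H₂ H₃ H₄ : Subgroup (G ⧸ N))
    (hviol : Nat.card H₁ * Nat.card H₂ * Nat.card (H₃ ⊓ H₄ : Subgroup (G ⧸ N)) *
        Nat.card (H₁ ⊓ H₂ ⊓ H₃ : Subgroup (G ⧸ N)) * Nat.card (H₁ ⊓ H₂ ⊓ H₄ : Subgroup (G ⧸ N)) <
      Nat.card (H₁ ⊓ H₂ : Subgroup (G ⧸ N)) * Nat.card (H₁ ⊓ H₃ : Subgroup (G ⧸ N)) *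
        Nat.card (H₁ ⊓ H₄ : Subgroup (G ⧸ N)) * Nat.card (H₂ ⊓ H₃ : Subgroup (G ⧸ N)) *
        Nat.card (H₂ ⊓ H₄ : Subgroup (G ⧸ N)))
    (G₁ G₂ G₃ G₄ : Subgroup G)
    (h₁ : G₁ = H₁.comap (QuotientGroup.mk' N)) (h₂ : G₂ = H₂.comap (QuotientGroup.mk' N))
    (h₃ : G₃ = H₃.comap (QuotientGroup.mk' N)) (h₄ : G₄ = H₄.comap (QuotientGroup.mk' N)) :
    Nat.card G₁ * Nat.card G₂ * Nat.card (G₃ ⊓ G₄ : Subgroup G) *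
        Nat.card (G₁ ⊓ G₂ ⊓ G₃ : Subgroup G) * Nat.card (G₁ ⊓ G₂ ⊓ G₄ : Subgroup G) <
      Nat.card (G₁ ⊓ G₂ : Subgroup G) * Nat.card (G₁ ⊓ G₃ : Subgroup G) *
        Nat.card (G₁ ⊓ G₄ : Subgroup G) * Nat.card (G₂ ⊓ G₃ : Subgroup G) *
        Nat.card (G₂ ⊓ G₄ : Subgroup G) := by
  subst h₁ h₂ h₃ h₄
  simp only [← Subgroup.comap_inf, QuotientGroup.card_comap_mk']
  have hscaled := Nat.mul_lt_mul_of_pos_left hviol (pow_pos (Nat.card_pos (α := N)) 5)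
  convert hscaled using 1 <;> ring
end

section
/- Let q ≥ 5 be a prime power, 𝔽_q the field with q elements, and t a generator of 𝔽_qˣ. In GL(2,𝔽_q) let I be the identity matrix, B₁ = [[1,0],[-1,-1]], B₃ = [[1,0],[t-1,t]], C = [[0,1],[-1,-1]]. Define the subgroups: G₁ = ⟨tI, C, B₁⟩; G₂ = the subgroup of all invertible lower-triangular matrices; G₃ = ⟨tI, C·B₁, B₃⟩; G₄ = the subgroup of all invertible diagonal and anti-diagonal matrices. Then |G₁|·|G₂|·|G₃₄|·|G₁₂₃|·|G₁₂₄| = 6q(q-1)⁶ and |G₁₂|·|G₁₃|·|G₁₄|·|G₂₃|·|G₂₄| = 8(q-1)⁷; since q ≥ 5, the tuple (G₁,G₂,G₃,G₄) violates the Ingleton inequality |G₁|·|G₂|·|G₃₄|·|G₁₂₃|·|G₁₂₄| ≥ |G₁₂|·|G₁₃|·|G₁₄|·|G₂₃|·|G₂₄|. -/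
/-!
The scalar matrices form the centre `Z ≅ Fˣ` of `GL(2,F)`; it is generated by `T` and lies in
every `Gᵢ`. The matrices `C` and `B₁` generate a copy `S` of `S₃`, acting on row vectors by
permuting `e₀, e₁, -e₀ - e₁`, and `S ∩ Z = 1`. So `G₁ = Z ⊔ S`, and by Dedekind's law
`|G₁ ∩ H| = (q - 1) |S ∩ H|` whenever `Z ≤ H`; the groups `G₂`, `G₃`, `G₄` meet `S` in the three
distinct subgroups generated by a transposition. Moreover `G₃` is the conjugate of the monomial
group `G₄` by the lower shear `P = [[1,0],[-1,1]] ∈ G₂`, so `|G₂ ∩ G₃| = |G₂ ∩ G₄| = (q - 1)²`,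
while a monomial matrix whose `P`-conjugate is monomial is scalar, so `G₃ ∩ G₄ = Z`.
-/

open Equiv Matrix Pointwise

theorem Subgroup.card_sup_inf_of_normal {G : Type*} [Group G] {N K H : Subgroup G} [N.Normal]
    (hNK : Disjoint N K) (hNH : N ≤ H) :
    Nat.card ((N ⊔ K) ⊓ H : Subgroup G) = Nat.card N * Nat.card (K ⊓ H : Subgroup G) := by
  have hset : (((N ⊔ K) ⊓ H : Subgroup G) : Set G) =
      Set.range fun g : N × (K ⊓ H : Subgroup G) => (g.1 : G) * g.2 := by
    rw [Subgroup.coe_inf, Subgroup.normal_mul, ← Subgroup.mul_inf_assoc _ _ _ hNH]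
    ext x
    simp [Set.mem_mul]
  rw [← Nat.card_prod, ← Nat.card_range_of_injective
    (Subgroup.mul_injective_of_disjoint (hNK.mono_right inf_le_left)), ← hset]
  rfl

theorem MulAut.conj_inv_smul_of_mem_center {G : Type*} [Group G] {z : G}
    (hz : z ∈ Subgroup.center G) (g : G) : (MulAut.conj g)⁻¹ • z = z := by
  rw [MulAut.smul_def, ← map_inv, MulAut.conj_apply, Subgroup.mem_center_iff.1 hz,
    mul_inv_cancel_right]

theorem Subgroup.card_conj_smul {G : Type*} [Group G] (g : G) (H : Subgroup G) :
    Nat.card (MulAut.conj g • H : Subgroup G) = Nat.card H :=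
  Nat.card_congr (Subgroup.equivSMul _ H).toEquiv.symm

theorem MonoidHom.closure_singleton_eq_range {A G : Type*} [Group A] [Group G] (f : A →* G)
    {t : A} (ht : ∀ x, x ∈ Subgroup.zpowers t) : Subgroup.closure {f t} = f.range := by
  rw [← Subgroup.zpowers_eq_closure, ← MonoidHom.map_zpowers, (Subgroup.eq_top_iff' _).2 ht,
    ← MonoidHom.range_eq_map]

namespace IngletonGL2

variable {F : Type*} [Field F]

section Center

variable {n : Type*} [Fintype n] [DecidableEq n]

lemma closure_scalar_eq_center {t : Fˣ} (ht : ∀ x : Fˣ, x ∈ Subgroup.zpowers t) :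
    Subgroup.closure {GeneralLinearGroup.scalar n t} = Subgroup.center (GL n F) := by
  rw [MonoidHom.closure_singleton_eq_range _ ht, GeneralLinearGroup.center_eq_range_scalar]

lemma scalar_mem_center (u : Fˣ) : GeneralLinearGroup.scalar n u ∈ Subgroup.center (GL n F) := by
  rw [GeneralLinearGroup.center_eq_range_scalar]
  exact ⟨u, rfl⟩

lemma card_center [Nonempty n] [Fintype F] :
    Nat.card (Subgroup.center (GL n F)) = Fintype.card F - 1 := by
  have hinj : Function.Injective (GeneralLinearGroup.scalar n : Fˣ →* GL n F) := fun a b h =>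
    Units.ext (scalar_inj.1 (congrArg Units.val h))
  rw [GeneralLinearGroup.center_eq_range_scalar,
    ← Nat.card_congr (MonoidHom.ofInjective hinj).toEquiv, Nat.card_units, Nat.card_eq_fintype_card]

end Center

lemma offDiag_eq_zero_of_mem_center {M : GL (Fin 2) F} (hM : M ∈ Subgroup.center _) :
    (M : Matrix (Fin 2) (Fin 2) F) 0 1 = 0 ∧ (M : Matrix (Fin 2) (Fin 2) F) 1 0 = 0 := by
  obtain ⟨a, ha⟩ := GeneralLinearGroup.mem_center_iff_val_mem_range_scalar.1 hM
  simp [← ha]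

/-- The vectors `e₀, e₁, -e₀ - e₁`, which `S₃` permutes in its two-dimensional representation. -/
def rootVec : Fin 3 → Fin 2 → F := ![![1, 0], ![0, 1], ![-1, -1]]

lemma rootVec_one_eq_zero_iff (j : Fin 3) : rootVec (F := F) j 1 = 0 ↔ j = 0 := by
  fin_cases j <;> simp [rootVec]

lemma rootVec_zero_eq_zero_iff (j : Fin 3) : rootVec (F := F) j 0 = 0 ↔ j = 1 := by
  fin_cases j <;> simp [rootVec]

lemma sum_rootVec_comp (σ : Perm (Fin 3)) : ∑ j, rootVec (F := F) (σ j) = 0 := by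
  rw [Equiv.sum_comp σ rootVec, Fin.sum_univ_three]
  ext i; fin_cases i <;> simp [rootVec]

def s3Matrix (σ : Perm (Fin 3)) : Matrix (Fin 2) (Fin 2) F :=
  of fun i => rootVec (σ⁻¹ i.castSucc)

lemma rootVec_vecMul_s3Matrix (σ : Perm (Fin 3)) (j : Fin 3) :
    rootVec j ᵥ* s3Matrix σ = rootVec (F := F) (σ⁻¹ j) := by
  ext k
  have h := congrFun (sum_rootVec_comp (F := F) σ⁻¹) k
  simp only [Fin.sum_univ_three, Finset.sum_apply, Pi.zero_apply] at h
  fin_cases j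
  · simp [rootVec, s3Matrix, vecMul, dotProduct]
  · simp [rootVec, s3Matrix, vecMul, dotProduct]
  · simp only [vecMul, dotProduct, Fin.sum_univ_two, s3Matrix, of_apply]
    show -1 * rootVec (σ⁻¹ 0) k + -1 * rootVec (σ⁻¹ 1) k = rootVec (σ⁻¹ 2) k
    linear_combination -h

def s3Rep : Perm (Fin 3) →* GL (Fin 2) F :=
  MonoidHom.toHomUnits
    { toFun := s3Matrix
      map_one' := by ext i j; fin_cases i <;> fin_cases j <;> rfl
      map_mul' σ τ := by
        ext i k
        rw [mul_apply_eq_vecMul]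
        exact congrFun (rootVec_vecMul_s3Matrix τ (σ⁻¹ i.castSucc)).symm k }

lemma s3Rep_apply (σ : Perm (Fin 3)) (i j : Fin 2) :
    ((s3Rep σ : GL (Fin 2) F) : Matrix (Fin 2) (Fin 2) F) i j = rootVec (σ⁻¹ i.castSucc) j :=
  rfl

lemma val_s3Rep_finRotate_inv :
    ((s3Rep (finRotate 3)⁻¹ : GL (Fin 2) F) : Matrix (Fin 2) (Fin 2) F) = !![0, 1; -1, -1] := by
  ext i j; fin_cases i <;> fin_cases j <;> rfl

lemma val_s3Rep_swap :
    ((s3Rep (swap 1 2) : GL (Fin 2) F) : Matrix (Fin 2) (Fin 2) F) = !![1, 0; -1, -1] := by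
  ext i j; fin_cases i <;> fin_cases j <;> rfl

lemma closure_eq_range_s3Rep {C B : GL (Fin 2) F}
    (hC : (C : Matrix (Fin 2) (Fin 2) F) = !![0, 1; -1, -1])
    (hB : (B : Matrix (Fin 2) (Fin 2) F) = !![1, 0; -1, -1]) :
    Subgroup.closure {C, B} = s3Rep.range := by
  have hgen := Perm.closure_cycle_adjacent_swap isCycle_finRotate.inv
    (by rw [Perm.support_inv, support_finRotate]) (2 : Fin 3)
  rw [show swap (2 : Fin 3) ((finRotate 3)⁻¹ 2) = swap 1 2 by decide] at hgen
  rw [MonoidHom.range_eq_map, ← hgen, MonoidHom.map_closure, Set.image_pair,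
    Units.ext (hC.trans val_s3Rep_finRotate_inv.symm), Units.ext (hB.trans val_s3Rep_swap.symm)]

lemma eq_one_of_s3Rep_mem_center {σ : Perm (Fin 3)}
    (h : s3Rep σ ∈ Subgroup.center (GL (Fin 2) F)) : σ = 1 := by
  obtain ⟨h01, h10⟩ := offDiag_eq_zero_of_mem_center h
  rw [s3Rep_apply, rootVec_one_eq_zero_iff] at h01
  rw [s3Rep_apply, rootVec_zero_eq_zero_iff] at h10
  exact (by decide : ∀ σ : Perm (Fin 3), σ⁻¹ 0 = 0 → σ⁻¹ 1 = 1 → σ = 1) σ h01 h10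

lemma s3Rep_injective : Function.Injective (s3Rep (F := F)) :=
  (injective_iff_map_eq_one _).2 fun _ h => eq_one_of_s3Rep_mem_center (h ▸ one_mem _)

lemma disjoint_center_range_s3Rep :
    Disjoint (Subgroup.center (GL (Fin 2) F)) s3Rep.range := by
  rw [Subgroup.disjoint_def]
  rintro _ hc ⟨σ, rfl⟩
  rw [eq_one_of_s3Rep_mem_center hc, map_one]

lemma card_center_sup_range_s3Rep_inf [Fintype F] {H : Subgroup (GL (Fin 2) F)}
    (hH : Subgroup.center _ ≤ H) :
    Nat.card ((Subgroup.center _ ⊔ s3Rep.range) ⊓ H : Subgroup _) =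
      (Fintype.card F - 1) * Nat.card (H.comap s3Rep) := by
  rw [Subgroup.card_sup_inf_of_normal disjoint_center_range_s3Rep hH, card_center,
    ← Subgroup.map_comap_eq, Subgroup.card_map_of_injective s3Rep_injective]

lemma card_center_sup_range_s3Rep [Fintype F] :
    Nat.card (Subgroup.center _ ⊔ s3Rep.range : Subgroup (GL (Fin 2) F)) =
      (Fintype.card F - 1) * 6 := by
  simpa [Fintype.card_perm, Nat.factorial] using card_center_sup_range_s3Rep_inf (F := F) le_top

lemma card_comap_s3Rep {H : Subgroup (GL (Fin 2) F)} {p : Perm (Fin 3) → Prop} [DecidablePred p]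
    (h : ∀ σ, s3Rep σ ∈ H ↔ p σ) : Nat.card (H.comap s3Rep) = Fintype.card {σ // p σ} := by
  rw [← Nat.card_eq_fintype_card]
  exact Nat.card_congr (Equiv.subtypeEquivRight h)

variable (F) in
def lowerTriangular : Subgroup (GL (Fin 2) F) where
  carrier := {M | (M : Matrix (Fin 2) (Fin 2) F) 0 1 = 0}
  one_mem' := by simp
  mul_mem' {M N} hM hN := by
    simp_all [mul_apply, Fin.sum_univ_two]
  inv_mem' {M} hM := by
    show ((M⁻¹ : GL (Fin 2) F) : Matrix (Fin 2) (Fin 2) F) 0 1 = 0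
    rw [GeneralLinearGroup.coe_inv, Matrix.inv_def]
    simp [adjugate_fin_two, hM.out]

def IsMonomial (A : Matrix (Fin 2) (Fin 2) F) : Prop :=
  (A 0 1 = 0 ∧ A 1 0 = 0) ∨ (A 0 0 = 0 ∧ A 1 1 = 0)

variable (F) in
def monomial : Subgroup (GL (Fin 2) F) where
  carrier := {M | IsMonomial (M : Matrix (Fin 2) (Fin 2) F)}
  one_mem' := Or.inl (by simp)
  mul_mem' {M N} hM hN := by
    rcases hM with ⟨h1, h2⟩ | ⟨h1, h2⟩ <;> rcases hN with ⟨h3, h4⟩ | ⟨h3, h4⟩ <;>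
      simp_all [IsMonomial, mul_apply, Fin.sum_univ_two]
  inv_mem' {M} hM := by
    show IsMonomial ((M⁻¹ : GL (Fin 2) F) : Matrix (Fin 2) (Fin 2) F)
    rw [GeneralLinearGroup.coe_inv, Matrix.inv_def]
    rcases hM with ⟨h1, h2⟩ | ⟨h1, h2⟩ <;> simp [IsMonomial, adjugate_fin_two, h1, h2]

lemma mem_lowerTriangular {M : GL (Fin 2) F} :
    M ∈ lowerTriangular F ↔ (M : Matrix (Fin 2) (Fin 2) F) 0 1 = 0 :=
  Iff.rfl

lemma mem_monomial {M : GL (Fin 2) F} :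
    M ∈ monomial F ↔ IsMonomial (M : Matrix (Fin 2) (Fin 2) F) :=
  Iff.rfl

lemma diag_ne_zero_of_mem_lowerTriangular {M : GL (Fin 2) F} (hM : M ∈ lowerTriangular F) :
    (M : Matrix (Fin 2) (Fin 2) F) 0 0 ≠ 0 ∧ (M : Matrix (Fin 2) (Fin 2) F) 1 1 ≠ 0 := by
  have h := GeneralLinearGroup.det_ne_zero M
  rw [det_fin_two, mem_lowerTriangular.1 hM, zero_mul, sub_zero] at h
  exact mul_ne_zero_iff.1 h

lemma center_le_lowerTriangular : Subgroup.center _ ≤ lowerTriangular F :=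
  fun _ hM => (offDiag_eq_zero_of_mem_center hM).1

lemma center_le_monomial : Subgroup.center _ ≤ monomial F :=
  fun _ hM => Or.inl (offDiag_eq_zero_of_mem_center hM)

def lowerTriangularMk (x y : Fˣ) (z : F) : GL (Fin 2) F :=
  GeneralLinearGroup.mkOfDetNeZero !![(x : F), 0; z, y] (by simp [det_fin_two])

lemma lowerTriangularMk_injective :
    Function.Injective fun p : Fˣ × Fˣ × F => lowerTriangularMk p.1 p.2.1 p.2.2 := by
  rintro ⟨x, y, z⟩ ⟨x', y', z'⟩ h
  have h' := GeneralLinearGroup.ext_iff _ _ |>.1 h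
  simp_all [lowerTriangularMk, Units.ext_iff]

lemma eq_lowerTriangularMk {M : GL (Fin 2) F} (hM : M ∈ lowerTriangular F) :
    M = lowerTriangularMk (.mk0 _ (diag_ne_zero_of_mem_lowerTriangular hM).1)
      (.mk0 _ (diag_ne_zero_of_mem_lowerTriangular hM).2) ((M : Matrix (Fin 2) (Fin 2) F) 1 0) := by
  ext i j
  fin_cases i <;> fin_cases j <;> simp [lowerTriangularMk, mem_lowerTriangular.1 hM]

lemma card_lowerTriangular [Fintype F] :
    Nat.card (lowerTriangular F) =
      (Fintype.card F - 1) * ((Fintype.card F - 1) * Fintype.card F) := by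
  have hset : (lowerTriangular F : Set (GL (Fin 2) F)) =
      Set.range fun p : Fˣ × Fˣ × F => lowerTriangularMk p.1 p.2.1 p.2.2 := by
    ext M
    refine ⟨fun hM => ⟨(_, _, _), (eq_lowerTriangularMk hM).symm⟩, ?_⟩
    rintro ⟨p, rfl⟩
    simp [lowerTriangularMk, mem_lowerTriangular]
  rw [← Nat.card_eq_fintype_card, ← Nat.card_units, ← Nat.card_prod, ← Nat.card_prod,
    ← Nat.card_range_of_injective lowerTriangularMk_injective, ← hset]
  rfl

lemma card_lowerTriangular_inf_monomial [Fintype F] :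
    Nat.card (lowerTriangular F ⊓ monomial F : Subgroup _) =
      (Fintype.card F - 1) * (Fintype.card F - 1) := by
  have hset : ((lowerTriangular F ⊓ monomial F : Subgroup _) : Set (GL (Fin 2) F)) =
      Set.range fun p : Fˣ × Fˣ => lowerTriangularMk p.1 p.2 0 := by
    ext M
    constructor
    · rintro ⟨hM, h10 | h00⟩
      · obtain ⟨hx, hy⟩ := diag_ne_zero_of_mem_lowerTriangular hM
        refine ⟨(.mk0 _ hx, .mk0 _ hy), ?_⟩
        ext i j
        fin_cases i <;> fin_cases j <;> simp [lowerTriangularMk, h10.1, h10.2]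
      · exact absurd h00.1 (diag_ne_zero_of_mem_lowerTriangular hM).1
    · rintro ⟨p, rfl⟩
      simp [lowerTriangularMk, mem_lowerTriangular, mem_monomial, IsMonomial]
  have hinj : Function.Injective fun p : Fˣ × Fˣ => lowerTriangularMk p.1 p.2 0 := fun p q h => by
    simpa [Prod.ext_iff] using
      lowerTriangularMk_injective (a₁ := (p.1, p.2, 0)) (a₂ := (q.1, q.2, 0)) h
  rw [← Nat.card_eq_fintype_card, ← Nat.card_units, ← Nat.card_prod,
    ← Nat.card_range_of_injective hinj, ← hset]
  rfl

def diagUnits : Fˣ →* GL (Fin 2) F :=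
  (Units.map (diagonalRingHom (Fin 2) F).toMonoidHom).comp
    (MulEquiv.piUnits.symm.toMonoidHom.comp (MonoidHom.mulSingle (fun _ : Fin 2 => Fˣ) 1))

lemma val_diagUnits (u : Fˣ) :
    ((diagUnits u : GL (Fin 2) F) : Matrix (Fin 2) (Fin 2) F) = !![1, 0; 0, (u : F)] := by
  ext i j; fin_cases i <;> fin_cases j <;> simp [diagUnits, MulEquiv.piUnits]

lemma lowerTriangular_inf_monomial_le_center_sup :
    lowerTriangular F ⊓ monomial F ≤ Subgroup.center _ ⊔ diagUnits.range := by
  rintro N ⟨hN, h10 | h00⟩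
  · obtain ⟨hx, hy⟩ := diag_ne_zero_of_mem_lowerTriangular hN
    have hNeq : GeneralLinearGroup.scalar (Fin 2) (Units.mk0 _ hx) *
        diagUnits ((Units.mk0 _ hx)⁻¹ * Units.mk0 _ hy) = N := by
      refine Units.ext ?_
      rw [Units.val_mul, val_diagUnits]
      ext i j
      fin_cases i <;> fin_cases j <;> simp [h10.1, h10.2, hx]
    exact hNeq ▸ Subgroup.mul_mem_sup (scalar_mem_center _) ⟨_, rfl⟩
  · exact absurd h00.1 (diag_ne_zero_of_mem_lowerTriangular hN).1

lemma closure_eq_monomial {t : Fˣ} (ht : ∀ x : Fˣ, x ∈ Subgroup.zpowers t) {W : GL (Fin 2) F}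
    (hW : (W : Matrix (Fin 2) (Fin 2) F) = !![0, -1; -1, 0]) :
    Subgroup.closure {GeneralLinearGroup.scalar (Fin 2) t, W, diagUnits t} = monomial F := by
  set K := Subgroup.closure {GeneralLinearGroup.scalar (Fin 2) t, W, diagUnits t}
  refine le_antisymm ((Subgroup.closure_le _).2 ?_) fun M hM => ?_
  · rintro _ (rfl | rfl | rfl)
    · exact center_le_monomial (scalar_mem_center t)
    · exact Or.inr (by simp [hW])
    · exact Or.inl (by simp [val_diagUnits])
  have hdiag : lowerTriangular F ⊓ monomial F ≤ K := by
    refine lowerTriangular_inf_monomial_le_center_sup.trans (sup_le ?_ ?_)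
    · exact closure_scalar_eq_center (n := Fin 2) ht ▸ Subgroup.closure_mono (by simp)
    · exact MonoidHom.closure_singleton_eq_range diagUnits ht ▸ Subgroup.closure_mono (by simp)
  rcases hM with hM | ⟨h00, h11⟩
  · exact hdiag ⟨hM.1, Or.inl hM⟩
  · have hWW : W * W = 1 := by
      ext i j
      fin_cases i <;> fin_cases j <;> simp [hW]
    have hWM : W * M ∈ lowerTriangular F ⊓ monomial F := by
      refine ⟨?_, Or.inl ⟨?_, ?_⟩⟩ <;>
        simp [mem_lowerTriangular, hW, mul_apply, Fin.sum_univ_two, h00, h11]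
    rw [← one_mul M, ← hWW, mul_assoc]
    exact mul_mem (Subgroup.subset_closure (by simp)) (hdiag hWM)

variable (F) in
def lowerShear : GL (Fin 2) F :=
  ⟨!![1, 0; -1, 1], !![1, 0; 1, 1], by simp [one_fin_two], by simp [one_fin_two]⟩

lemma lowerShear_mem_lowerTriangular : lowerShear F ∈ lowerTriangular F := rfl

lemma val_conj_lowerShear_inv_smul (M : GL (Fin 2) F) :
    (((MulAut.conj (lowerShear F))⁻¹ • M : GL (Fin 2) F) : Matrix (Fin 2) (Fin 2) F) =
      !![M.val 0 0 - M.val 0 1, M.val 0 1;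
        M.val 0 0 + M.val 1 0 - M.val 0 1 - M.val 1 1, M.val 0 1 + M.val 1 1] := by
  rw [MulAut.smul_def, ← map_inv, MulAut.conj_apply, inv_inv, Units.val_mul, Units.val_mul]
  show !![1, 0; 1, 1] * M.val * !![1, 0; -1, 1] = _
  conv_lhs => rw [eta_fin_two M.val]
  rw [mul_fin_two, mul_fin_two]
  ring_nf

lemma closure_eq_conj_smul_monomial {t : Fˣ} (ht : ∀ x : Fˣ, x ∈ Subgroup.zpowers t)
    {C B₁ B₃ : GL (Fin 2) F}
    (hC : (C : Matrix (Fin 2) (Fin 2) F) = !![0, 1; -1, -1])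
    (hB₁ : (B₁ : Matrix (Fin 2) (Fin 2) F) = !![1, 0; -1, -1])
    (hB₃ : (B₃ : Matrix (Fin 2) (Fin 2) F) = !![1, 0; (t : F) - 1, (t : F)]) :
    Subgroup.closure {GeneralLinearGroup.scalar (Fin 2) t, C * B₁, B₃} =
      MulAut.conj (lowerShear F) • monomial F := by
  rw [← inv_smul_eq_iff, Subgroup.smul_closure, Set.smul_set_insert, Set.smul_set_insert,
    Set.smul_set_singleton, MulAut.conj_inv_smul_of_mem_center (scalar_mem_center t)]
  have hD : (MulAut.conj (lowerShear F))⁻¹ • B₃ = diagUnits t := by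
    ext i j
    rw [val_conj_lowerShear_inv_smul, hB₃, val_diagUnits]
    fin_cases i <;> fin_cases j <;> simp
  rw [hD]
  refine closure_eq_monomial ht ?_
  rw [val_conj_lowerShear_inv_smul, Units.val_mul, hC, hB₁]
  ext i j
  fin_cases i <;> fin_cases j <;> simp [mul_apply, Fin.sum_univ_two]

lemma center_le_conj_smul_monomial :
    Subgroup.center _ ≤ MulAut.conj (lowerShear F) • monomial F := fun _ hz => by
  rw [Subgroup.mem_pointwise_smul_iff_inv_smul_mem, MulAut.conj_inv_smul_of_mem_center hz]
  exact center_le_monomial hz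

lemma conj_smul_monomial_inf_monomial :
    MulAut.conj (lowerShear F) • monomial F ⊓ monomial F = Subgroup.center _ := by
  refine le_antisymm (fun M hM => ?_) (le_inf center_le_conj_smul_monomial center_le_monomial)
  obtain ⟨h3, h4⟩ := Subgroup.mem_inf.1 hM
  rw [Subgroup.mem_pointwise_smul_iff_inv_smul_mem, mem_monomial,
    val_conj_lowerShear_inv_smul] at h3
  have hdet := GeneralLinearGroup.det_ne_zero M
  rw [det_fin_two] at hdet
  refine GeneralLinearGroup.mem_center_iff_val_mem_range_scalar.2 ⟨M.val 0 0, ?_⟩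
  rcases h4 with ⟨h01, h10⟩ | ⟨h00, h11⟩
  · rcases h3 with ⟨-, h⟩ | ⟨h, -⟩
    · simp only [of_apply, cons_val', cons_val_zero, cons_val_one, cons_val_fin_one,
        h01, h10, add_zero, sub_zero] at h
      ext i j
      fin_cases i <;> fin_cases j <;> simp [h01, h10, sub_eq_zero.1 h]
    · simp_all
  · rcases h3 with ⟨h, -⟩ | ⟨h, -⟩ <;> simp_all

lemma lowerTriangular_inf_conj_smul_monomial :
    lowerTriangular F ⊓ MulAut.conj (lowerShear F) • monomial F =
      MulAut.conj (lowerShear F) • (lowerTriangular F ⊓ monomial F) := by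
  rw [Subgroup.smul_inf, Subgroup.conj_smul_eq_self_of_mem lowerShear_mem_lowerTriangular]

lemma s3Rep_mem_lowerTriangular_iff (σ : Perm (Fin 3)) :
    s3Rep σ ∈ lowerTriangular F ↔ σ⁻¹ 0 = 0 :=
  rootVec_one_eq_zero_iff _

lemma s3Rep_mem_monomial_iff (σ : Perm (Fin 3)) :
    s3Rep σ ∈ monomial F ↔ (σ⁻¹ 0 = 0 ∧ σ⁻¹ 1 = 1) ∨ (σ⁻¹ 0 = 1 ∧ σ⁻¹ 1 = 0) := by
  simp only [mem_monomial, IsMonomial, s3Rep_apply, Fin.castSucc_zero, Fin.castSucc_one,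
    rootVec_one_eq_zero_iff, rootVec_zero_eq_zero_iff]

lemma s3Rep_mem_conj_smul_monomial_iff (σ : Perm (Fin 3)) :
    s3Rep σ ∈ MulAut.conj (lowerShear F) • monomial F ↔
      (σ⁻¹ 0 = 0 ∧ σ⁻¹ 1 = 1) ∨ (σ⁻¹ 0 = 2 ∧ σ⁻¹ 1 = 1) := by
  rw [Subgroup.mem_pointwise_smul_iff_inv_smul_mem, mem_monomial, val_conj_lowerShear_inv_smul]
  simp only [s3Rep_apply, Fin.castSucc_zero, Fin.castSucc_one]
  -- in characteristic 2 the pairs `(0, 0)` and `(2, 2)` would also satisfy the condition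
  have hij : σ⁻¹ 0 ≠ σ⁻¹ 1 := (σ⁻¹).injective.ne (by decide)
  generalize σ⁻¹ 0 = i, σ⁻¹ 1 = j at hij ⊢
  fin_cases i <;> fin_cases j <;> simp [IsMonomial, rootVec] at hij ⊢

lemma card_comap_s3Rep_lowerTriangular : Nat.card ((lowerTriangular F).comap s3Rep) = 2 := by
  rw [card_comap_s3Rep s3Rep_mem_lowerTriangular_iff]
  decide

lemma card_comap_s3Rep_monomial : Nat.card ((monomial F).comap s3Rep) = 2 := by
  rw [card_comap_s3Rep s3Rep_mem_monomial_iff]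
  decide

lemma card_comap_s3Rep_conj_smul_monomial :
    Nat.card ((MulAut.conj (lowerShear F) • monomial F).comap s3Rep) = 2 := by
  rw [card_comap_s3Rep s3Rep_mem_conj_smul_monomial_iff]
  decide

lemma card_comap_s3Rep_lowerTriangular_inf_monomial :
    Nat.card ((lowerTriangular F ⊓ monomial F).comap s3Rep) = 1 := by
  rw [card_comap_s3Rep fun σ => Subgroup.mem_inf.trans
    ((s3Rep_mem_lowerTriangular_iff σ).and (s3Rep_mem_monomial_iff σ))]
  decide

lemma card_comap_s3Rep_lowerTriangular_inf_conj_smul_monomial :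
    Nat.card ((lowerTriangular F ⊓ MulAut.conj (lowerShear F) • monomial F).comap s3Rep) = 1 := by
  rw [card_comap_s3Rep fun σ => Subgroup.mem_inf.trans
    ((s3Rep_mem_lowerTriangular_iff σ).and (s3Rep_mem_conj_smul_monomial_iff σ))]
  decide

end IngletonGL2

open IngletonGL2 in
/-- Ingleton violation in `GL(2,q)` for prime powers `q ≥ 5` (the preimages of the
`PGL(2,q)` subgroups): with `G₁ = ⟨tI, C, B₁⟩`, `G₂` the lower-triangular subgroup,
`G₃ = ⟨tI, C·B₁, B₃⟩` and `G₄` the subgroup of diagonal and anti-diagonal matrices,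
the two sides of the Ingleton inequality are `6q(q-1)⁶` and `8(q-1)⁷`, and the
inequality is violated. -/
theorem stmt10 (F : Type*) [Field F] [Fintype F]
    (hq : 5 ≤ Fintype.card F)
    (t : Fˣ) (ht : ∀ x : Fˣ, x ∈ Subgroup.zpowers t)
    (T B₁ B₃ C : GL (Fin 2) F)
    (hT : (T : Matrix (Fin 2) (Fin 2) F) = !![(t : F), 0; 0, (t : F)])
    (hB₁ : (B₁ : Matrix (Fin 2) (Fin 2) F) = !![1, 0; -1, -1])
    (hB₃ : (B₃ : Matrix (Fin 2) (Fin 2) F) = !![1, 0; (t : F) - 1, (t : F)])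
    (hC : (C : Matrix (Fin 2) (Fin 2) F) = !![0, 1; -1, -1])
    (G₁ G₂ G₃ G₄ : Subgroup (GL (Fin 2) F))
    (h₁ : G₁ = Subgroup.closure {T, C, B₁})
    (h₂ : (G₂ : Set (GL (Fin 2) F)) =
        {M : GL (Fin 2) F | (M : Matrix (Fin 2) (Fin 2) F) 0 1 = 0})
    (h₃ : G₃ = Subgroup.closure {T, C * B₁, B₃})
    (h₄ : (G₄ : Set (GL (Fin 2) F)) =
        {M : GL (Fin 2) F |
          ((M : Matrix (Fin 2) (Fin 2) F) 0 1 = 0 ∧ (M : Matrix (Fin 2) (Fin 2) F) 1 0 = 0) ∨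
          ((M : Matrix (Fin 2) (Fin 2) F) 0 0 = 0 ∧ (M : Matrix (Fin 2) (Fin 2) F) 1 1 = 0)}) :
    Nat.card G₁ * Nat.card G₂ * Nat.card (G₃ ⊓ G₄ : Subgroup _) *
        Nat.card (G₁ ⊓ G₂ ⊓ G₃ : Subgroup _) * Nat.card (G₁ ⊓ G₂ ⊓ G₄ : Subgroup _) =
      6 * Fintype.card F * (Fintype.card F - 1) ^ 6 ∧
    Nat.card (G₁ ⊓ G₂ : Subgroup _) * Nat.card (G₁ ⊓ G₃ : Subgroup _) *
        Nat.card (G₁ ⊓ G₄ : Subgroup _) * Nat.card (G₂ ⊓ G₃ : Subgroup _) *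
        Nat.card (G₂ ⊓ G₄ : Subgroup _) = 8 * (Fintype.card F - 1) ^ 7 ∧
    ¬(Nat.card G₁ * Nat.card G₂ * Nat.card (G₃ ⊓ G₄ : Subgroup _) *
          Nat.card (G₁ ⊓ G₂ ⊓ G₃ : Subgroup _) * Nat.card (G₁ ⊓ G₂ ⊓ G₄ : Subgroup _) ≥
        Nat.card (G₁ ⊓ G₂ : Subgroup _) * Nat.card (G₁ ⊓ G₃ : Subgroup _) *
          Nat.card (G₁ ⊓ G₄ : Subgroup _) * Nat.card (G₂ ⊓ G₃ : Subgroup _) *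
          Nat.card (G₂ ⊓ G₄ : Subgroup _)) := by
  have hT' : T = GeneralLinearGroup.scalar (Fin 2) t := by
    ext i j
    fin_cases i <;> fin_cases j <;> simp [hT]
  obtain rfl : G₁ = Subgroup.center _ ⊔ s3Rep.range := by
    rw [h₁, hT', Set.insert_eq, Subgroup.closure_union, closure_scalar_eq_center ht,
      closure_eq_range_s3Rep hC hB₁]
  obtain rfl : G₂ = lowerTriangular F := SetLike.coe_injective h₂
  obtain rfl : G₄ = monomial F := SetLike.coe_injective h₄
  obtain rfl : G₃ = MulAut.conj (lowerShear F) • monomial F := by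
    rw [h₃, hT', closure_eq_conj_smul_monomial ht hC hB₁ hB₃]
  rw [inf_assoc, inf_assoc, card_center_sup_range_s3Rep,
    card_center_sup_range_s3Rep_inf center_le_lowerTriangular,
    card_center_sup_range_s3Rep_inf center_le_conj_smul_monomial,
    card_center_sup_range_s3Rep_inf center_le_monomial,
    card_center_sup_range_s3Rep_inf (le_inf center_le_lowerTriangular center_le_conj_smul_monomial),
    card_center_sup_range_s3Rep_inf (le_inf center_le_lowerTriangular center_le_monomial),
    card_comap_s3Rep_lowerTriangular, card_comap_s3Rep_conj_smul_monomial,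
    card_comap_s3Rep_monomial, card_comap_s3Rep_lowerTriangular_inf_conj_smul_monomial,
    card_comap_s3Rep_lowerTriangular_inf_monomial, conj_smul_monomial_inf_monomial, card_center,
    lowerTriangular_inf_conj_smul_monomial, Subgroup.card_conj_smul, card_lowerTriangular,
    card_lowerTriangular_inf_monomial]
  obtain ⟨m, hm⟩ : ∃ m, Fintype.card F = m + 5 := ⟨_, (Nat.sub_add_cancel hq).symm⟩
  rw [hm, show m + 5 - 1 = m + 4 by omega]
  refine ⟨by ring, by ring, fun h => ?_⟩
  have : 0 < (m + 4) ^ 6 * (2 * m + 2) := by positivity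
  nlinarith
end

section
/- Let q be a prime power with odd characteristic p ≠ 2, such that (q−1)/2 is even, let 𝔽_q be the field with q elements and t a generator of 𝔽_qˣ. In GL(2,𝔽_q) define the subgroups K = { [[1,0],[α,β]] : α ∈ 𝔽_q, β ∈ 𝔽_qˣ } and K′ = { [[(−1)^k, 0],[α, t^k]] : α ∈ 𝔽_q, 0 ≤ k ≤ q−2 }. Then K and K′ are isomorphic groups; an isomorphism is given by [[1,0],[α,0]]·B^k ↦ [[1,0],[α,0]]·(B′)^{((q+1)/2)·k}, where B = [[1,0],[0,t]] and B′ = [[−1,0],[0,t]]. -/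
/-!
Let `q = 2n + 1`. Scaling every matrix by the `n`-th power of its determinant,
`M ↦ det(M)^n • M`, is a group endomorphism of `GL(2, 𝔽_q)`, and it is an involution because
`det(det(M)^n • M) = det(M)^{2n+1} = det M`. It fixes every unipotent `A_α`, and since `t^n = -1`
and `n` is even it sends `B` to `-B = (B′)^{n+1}` and `B′` to `-B′ = B^{n+1}`. As `K` consists of
the products `A_α B^k` and `K′` of the products `A_α (B′)^k`, the involution exchanges `K` and `K′`.
-/

namespace Matrix.GeneralLinearGroup

variable {ι R : Type*} [Fintype ι] [DecidableEq ι] [CommRing R]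

def detPowSMul (n : ℕ) : GL ι R →* GL ι R where
  toFun M := det M ^ n • M
  map_one' := by simp
  map_mul' M N := by
    ext : 1
    simp only [map_mul, mul_pow, Units.val_mul, Units.val_smul, Matrix.smul_mul, Matrix.mul_smul,
      smul_smul, mul_comm]

theorem detPowSMul_apply (n : ℕ) (M : GL ι R) : detPowSMul n M = det M ^ n • M := rfl

theorem det_units_smul (u : Rˣ) (M : GL ι R) : det (u • M) = u ^ Fintype.card ι * det M := by
  ext
  simp [Units.smul_def]

theorem detPowSMul_of_det_pow_eq_one {n : ℕ} {M : GL ι R} (h : det M ^ n = 1) :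
    detPowSMul n M = M := by
  rw [detPowSMul_apply, h, one_smul]

theorem detPowSMul_of_det_pow_eq_neg_one {n : ℕ} {M : GL ι R} (h : det M ^ n = -1) :
    detPowSMul n M = -M := by
  ext : 1
  simp [detPowSMul_apply, h]

theorem detPowSMul_involutive {n : ℕ} (h : ∀ u : Rˣ, u ^ (2 * n) = 1) :
    Function.Involutive (detPowSMul n : GL (Fin 2) R → GL (Fin 2) R) := by
  intro M
  have hdet : det (detPowSMul n M) = det M := by
    rw [detPowSMul_apply, det_units_smul, Fintype.card_fin, ← pow_mul, mul_comm n, h, one_mul]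
  rw [detPowSMul_apply, hdet, detPowSMul_apply, smul_smul, ← pow_add, ← two_mul, h, one_smul]

theorem val_pow_of_val_eq {D : GL (Fin 2) R} {a b : R}
    (hD : (D : Matrix (Fin 2) (Fin 2) R) = !![a, 0; 0, b]) (k : ℕ) :
    ((D ^ k : GL (Fin 2) R) : Matrix (Fin 2) (Fin 2) R) = !![a ^ k, 0; 0, b ^ k] := by
  rw [Units.val_pow_eq_pow_val, hD, ← Matrix.diagonal_vec2, Matrix.diagonal_pow,
    ← Matrix.diagonal_vec2]
  simp

theorem val_mul_pow_of_val_eq {A D : GL (Fin 2) R} {α a b : R}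
    (hA : (A : Matrix (Fin 2) (Fin 2) R) = !![1, 0; α, 1])
    (hD : (D : Matrix (Fin 2) (Fin 2) R) = !![a, 0; 0, b]) (k : ℕ) :
    ((A * D ^ k : GL (Fin 2) R) : Matrix (Fin 2) (Fin 2) R) = !![a ^ k, 0; α * a ^ k, b ^ k] := by
  rw [Units.val_mul, hA, val_pow_of_val_eq hD, Matrix.mul_fin_two]
  simp

theorem detPowSMul_eq_pow_of_val_eq {n : ℕ} (hn : Even n) {a t : R} (ha : a ^ 2 = 1)
    (ht : t ^ n = -1) {D D' : GL (Fin 2) R}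
    (hD : (D : Matrix (Fin 2) (Fin 2) R) = !![a, 0; 0, t])
    (hD' : (D' : Matrix (Fin 2) (Fin 2) R) = !![-a, 0; 0, t]) :
    detPowSMul n D = D' ^ (n + 1) := by
  obtain ⟨m, rfl⟩ := hn
  have han : a ^ (m + m) = 1 := by rw [← two_mul, pow_mul, ha, one_pow]
  have hdet : det D ^ (m + m) = -1 := by
    ext
    simp [hD, Matrix.det_fin_two_of, mul_pow, han, ht]
  rw [detPowSMul_of_det_pow_eq_neg_one hdet]
  ext : 1
  rw [Units.val_neg, hD, val_pow_of_val_eq hD', pow_succ, pow_succ, ht, Even.neg_pow ⟨m, rfl⟩, han]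
  simp

end Matrix.GeneralLinearGroup

open Matrix.GeneralLinearGroup

theorem Subgroup.map_eq_of_involutive {G : Type*} [Group G] {f : G →* G}
    (hf : Function.Involutive f) {H H' : Subgroup G} (hH : ∀ x ∈ H, f x ∈ H')
    (hH' : ∀ x ∈ H', f x ∈ H) : H.map f = H' :=
  le_antisymm (Subgroup.map_le_iff_le_comap.mpr hH) fun x hx => ⟨f x, hH' x hx, hf x⟩

section FiniteField

variable {F : Type*} [Field F] [Fintype F] {n : ℕ}

theorem FiniteField.ne_zero_of_card_eq (hq : Fintype.card F = 2 * n + 1) : n ≠ 0 := by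
  rintro rfl
  exact (Fintype.one_lt_card (α := F)).ne' hq

theorem FiniteField.units_pow_eq_one_of_card_eq (hq : Fintype.card F = 2 * n + 1) (u : Fˣ) :
    u ^ (2 * n) = 1 := by
  rw [← pow_card_eq_one' (x := u), Nat.card_units, Nat.card_eq_fintype_card, hq,
    Nat.add_sub_cancel]

theorem FiniteField.pow_eq_neg_one_of_forall_mem_zpowers (hq : Fintype.card F = 2 * n + 1)
    {t : Fˣ} (ht : ∀ x : Fˣ, x ∈ Subgroup.zpowers t) : (t : F) ^ n = -1 := by
  have hord : orderOf t = 2 * n := by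
    rw [orderOf_eq_card_of_forall_mem_zpowers ht, Nat.card_units, Nat.card_eq_fintype_card, hq,
      Nat.add_sub_cancel]
  have hn := FiniteField.ne_zero_of_card_eq hq
  have hne : t ^ n ≠ 1 := pow_ne_one_of_lt_orderOf hn (by omega)
  have hsq : ((t : F) ^ n) ^ 2 = 1 := by
    rw [← pow_mul, mul_comm, ← Units.val_pow_eq_pow_val, ← hord, pow_orderOf_eq_one, Units.val_one]
  refine (sq_eq_one_iff.mp hsq).resolve_left fun h => hne (Units.ext ?_)
  simpa using h

theorem exists_val_eq_iff_exists_eq_mul_pow {t : Fˣ} (ht : ∀ x : Fˣ, x ∈ Subgroup.zpowers t)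
    {A : F → GL (Fin 2) F} (hA : ∀ α : F, (A α : Matrix (Fin 2) (Fin 2) F) = !![1, 0; α, 1])
    {B : GL (Fin 2) F} (hB : (B : Matrix (Fin 2) (Fin 2) F) = !![1, 0; 0, (t : F)])
    (M : GL (Fin 2) F) :
    (∃ (α : F) (β : Fˣ), (M : Matrix (Fin 2) (Fin 2) F) = !![1, 0; α, (β : F)]) ↔
      ∃ (α : F) (k : ℕ), M = A α * B ^ k := by
  constructor
  · rintro ⟨α, β, hM⟩
    obtain ⟨k, rfl⟩ := mem_powers_iff_mem_zpowers.mpr (ht β)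
    exact ⟨α, k, Units.ext (by rw [hM, val_mul_pow_of_val_eq (hA α) hB]; simp)⟩
  · rintro ⟨α, k, rfl⟩
    exact ⟨α, t ^ k, by rw [val_mul_pow_of_val_eq (hA α) hB]; simp⟩

theorem exists_val_eq_signed_iff_exists_eq_mul_pow (hq : Fintype.card F = 2 * n + 1) {t : Fˣ}
    {A : F → GL (Fin 2) F} (hA : ∀ α : F, (A α : Matrix (Fin 2) (Fin 2) F) = !![1, 0; α, 1])
    {B' : GL (Fin 2) F} (hB' : (B' : Matrix (Fin 2) (Fin 2) F) = !![-1, 0; 0, (t : F)])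
    (M : GL (Fin 2) F) :
    (∃ (α : F) (k : ℕ), k ≤ Fintype.card F - 2 ∧
        (M : Matrix (Fin 2) (Fin 2) F) = !![(-1 : F) ^ k, 0; α, (t : F) ^ k]) ↔
      ∃ (α : F) (k : ℕ), M = A α * B' ^ k := by
  constructor
  · rintro ⟨α, k, -, hM⟩
    refine ⟨α * (-1) ^ k, k, Units.ext ?_⟩
    rw [hM, val_mul_pow_of_val_eq (hA _) hB', mul_assoc, ← mul_pow, neg_one_mul, neg_neg, one_pow,
      mul_one]
  · rintro ⟨α, k, rfl⟩
    have hB'pow : B' ^ (2 * n) = 1 := by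
      ext : 1
      have htpow : (t : F) ^ (2 * n) = 1 := by
        rw [← Units.val_pow_eq_pow_val, FiniteField.units_pow_eq_one_of_card_eq hq, Units.val_one]
      rw [val_pow_of_val_eq hB', pow_mul, neg_one_sq, one_pow, htpow, Units.val_one,
        Matrix.one_fin_two]
    have hn := FiniteField.ne_zero_of_card_eq hq
    refine ⟨α * (-1) ^ (k % (2 * n)), k % (2 * n), ?_, ?_⟩
    · have := Nat.mod_lt k (show 2 * n > 0 by omega)
      omega
    · rw [pow_eq_pow_mod k hB'pow, val_mul_pow_of_val_eq (hA α) hB']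

end FiniteField

/-- For `q` of odd characteristic with `(q-1)/2` even, the subgroups
`K = {[[1,0],[α,β]]}` and `K′ = {[[(−1)^k,0],[α,t^k]]}` of `GL(2,𝔽_q)` are
isomorphic, via `A_α·B^k ↦ A_α·(B′)^{((q+1)/2)·k}`. -/
theorem stmt11 (F : Type*) [Field F] [Fintype F]
    (hchar : ringChar F ≠ 2)
    (heven : Even ((Fintype.card F - 1) / 2))
    (t : Fˣ) (ht : ∀ x : Fˣ, x ∈ Subgroup.zpowers t)
    (A : F → GL (Fin 2) F)
    (hA : ∀ α : F, (A α : Matrix (Fin 2) (Fin 2) F) = !![1, 0; α, 1])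
    (B B' : GL (Fin 2) F)
    (hB : (B : Matrix (Fin 2) (Fin 2) F) = !![1, 0; 0, (t : F)])
    (hB' : (B' : Matrix (Fin 2) (Fin 2) F) = !![-1, 0; 0, (t : F)])
    (K K' : Subgroup (GL (Fin 2) F))
    (hK : (K : Set (GL (Fin 2) F)) =
        {M : GL (Fin 2) F | ∃ (α : F) (β : Fˣ),
          (M : Matrix (Fin 2) (Fin 2) F) = !![1, 0; α, (β : F)]})
    (hK' : (K' : Set (GL (Fin 2) F)) =
        {M : GL (Fin 2) F | ∃ (α : F) (k : ℕ), k ≤ Fintype.card F - 2 ∧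
          (M : Matrix (Fin 2) (Fin 2) F) = !![(-1 : F) ^ k, 0; α, (t : F) ^ k]}) :
    ∃ φ : K ≃* K', ∀ (α : F) (k : ℕ) (h : A α * B ^ k ∈ K),
      ((φ ⟨A α * B ^ k, h⟩ : K') : GL (Fin 2) F) =
        A α * B' ^ (((Fintype.card F + 1) / 2) * k) := by
  obtain ⟨n, hq⟩ : ∃ n, Fintype.card F = 2 * n + 1 :=
    ⟨Fintype.card F / 2, by have := FiniteField.odd_card_of_char_ne_two hchar; omega⟩
  have hn : Even n := by rwa [hq, Nat.add_sub_cancel, Nat.mul_div_cancel_left _ two_pos] at heven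
  have htn := FiniteField.pow_eq_neg_one_of_forall_mem_zpowers hq ht
  set f : GL (Fin 2) F →* GL (Fin 2) F := detPowSMul n
  have hf : Function.Involutive f :=
    detPowSMul_involutive (FiniteField.units_pow_eq_one_of_card_eq hq)
  have hfA (α : F) : f (A α) = A α :=
    detPowSMul_of_det_pow_eq_one (by ext; simp [hA, Matrix.det_fin_two_of])
  have hfB : f B = B' ^ (n + 1) := detPowSMul_eq_pow_of_val_eq hn (one_pow 2) htn hB hB'
  have hfB' : f B' = B ^ (n + 1) :=
    detPowSMul_eq_pow_of_val_eq hn (by norm_num) htn hB' (by rw [neg_neg]; exact hB)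
  have hmemK (M) : M ∈ K ↔ ∃ (α : F) (k : ℕ), M = A α * B ^ k := by
    rw [← SetLike.mem_coe, hK]; exact exists_val_eq_iff_exists_eq_mul_pow ht hA hB M
  have hmemK' (M) : M ∈ K' ↔ ∃ (α : F) (k : ℕ), M = A α * B' ^ k := by
    rw [← SetLike.mem_coe, hK']; exact exists_val_eq_signed_iff_exists_eq_mul_pow hq hA hB' M
  have hmap : K.map f = K' := by
    refine Subgroup.map_eq_of_involutive hf (fun M hM => ?_) (fun M hM => ?_)
    · obtain ⟨α, k, rfl⟩ := (hmemK M).mp hM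
      exact (hmemK' _).mpr ⟨α, (n + 1) * k, by rw [map_mul, map_pow, hfA, hfB, pow_mul]⟩
    · obtain ⟨α, k, rfl⟩ := (hmemK' M).mp hM
      exact (hmemK _).mpr ⟨α, (n + 1) * k, by rw [map_mul, map_pow, hfA, hfB', pow_mul]⟩
  refine ⟨(K.equivMapOfInjective f hf.injective).trans (MulEquiv.subgroupCongr hmap),
    fun α k h => ?_⟩
  change f (A α * B ^ k) = _
  rw [show (Fintype.card F + 1) / 2 = n + 1 by omega, map_mul, map_pow, hfA, hfB, pow_mul]
end

section
/- Let G be a finite group with subgroups G₁, G₂, G₃, G₄. Suppose that for some pair of distinct indices i, j ∈ {1,2,3,4} with {i,j} ≠ {3,4}, the subgroups G_i and G_j are independent, i.e., |G_i|·|G_j| = |G|·|G_i ∩ G_j|. Then the Ingleton inequality holds: |G₁|·|G₂|·|G₃₄|·|G₁₂₃|·|G₁₂₄| ≥ |G₁₂|·|G₁₃|·|G₁₄|·|G₂₃|·|G₂₄|. -/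
/-!
The basic tool is `|K| · |L| ≤ |M| · |K ⊓ L|` for subgroups `K, L` of a finite group `M` (the
product set `KL` has `|K| · |L| / |K ⊓ L|` elements), applied in `G` and, to the traces of the
other subgroups, inside a single `Gᵢ`. Multiplying three such inequalities with the independence
equation and cancelling gives the Ingleton inequality. It is invariant under `G₁ ↔ G₂` and
`G₃ ↔ G₄`, so only the independent pairs `{1, 2}` and `{1, 3}` need a proof.
-/

namespace Subgroup

variable {G : Type*} [Group G]

def IsIndependent (K L : Subgroup G) : Prop :=
  Nat.card K * Nat.card L = Nat.card G * Nat.card ↥(K ⊓ L)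

theorem IsIndependent.symm {K L : Subgroup G} (h : IsIndependent K L) : IsIndependent L K := by
  rwa [IsIndependent, mul_comm, inf_comm]

def IngletonInequality (A B C D : Subgroup G) : Prop :=
  Nat.card ↥(A ⊓ B) * Nat.card ↥(A ⊓ C) * Nat.card ↥(A ⊓ D) * Nat.card ↥(B ⊓ C) *
      Nat.card ↥(B ⊓ D) ≤
    Nat.card A * Nat.card B * Nat.card ↥(C ⊓ D) * Nat.card ↥(A ⊓ B ⊓ C) * Nat.card ↥(A ⊓ B ⊓ D)

theorem IngletonInequality.swap_left {A B C D : Subgroup G} (h : IngletonInequality A B C D) :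
    IngletonInequality B A C D := by
  unfold IngletonInequality at *
  rw [inf_comm B A]
  convert h using 1 <;> ring

theorem IngletonInequality.swap_right {A B C D : Subgroup G} (h : IngletonInequality A B C D) :
    IngletonInequality A B D C := by
  unfold IngletonInequality at *
  rw [inf_comm D C]
  convert h using 1 <;> ring

variable [Finite G]

theorem card_mul_card_le_card_mul_card_inf_s12 (K L : Subgroup G) :
    Nat.card K * Nat.card L ≤ Nat.card G * Nat.card ↥(K ⊓ L) := by
  have hG : 0 < Nat.card G := Nat.card_pos
  refine Nat.le_of_mul_le_mul_left ?_ hG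
  calc Nat.card G * (Nat.card K * Nat.card L)
      = (K ⊓ L).index * Nat.card ↥(K ⊓ L) * Nat.card K * Nat.card L := by
        rw [index_mul_card]; ring
    _ ≤ K.index * L.index * Nat.card ↥(K ⊓ L) * Nat.card K * Nat.card L := by
        gcongr; exact index_inf_le
    _ = K.index * Nat.card K * (L.index * Nat.card L) * Nat.card ↥(K ⊓ L) := by ring
    _ = Nat.card G * (Nat.card G * Nat.card ↥(K ⊓ L)) := by
        rw [index_mul_card, index_mul_card, mul_assoc]

theorem card_inf_mul_card_inf_le_s12 (K L M : Subgroup G) :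
    Nat.card ↥(K ⊓ M) * Nat.card ↥(L ⊓ M) ≤ Nat.card M * Nat.card ↥(K ⊓ L ⊓ M) := by
  have hcard (N : Subgroup G) : Nat.card (N.subgroupOf M) = Nat.card ↥(N ⊓ M) := by
    rw [← subgroupOf_map_subtype, card_map_of_injective M.subtype_injective]
  have hinf : K.subgroupOf M ⊓ L.subgroupOf M = (K ⊓ L).subgroupOf M :=
    (comap_inf _ _ _).symm
  have := card_mul_card_le_card_mul_card_inf_s12 (K.subgroupOf M) (L.subgroupOf M)
  rwa [hinf, hcard, hcard, hcard] at this

theorem ingletonInequality_of_isIndependent_left {A B : Subgroup G} (hAB : IsIndependent A B)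
    (C D : Subgroup G) : IngletonInequality A B C D := by
  have hC := card_inf_mul_card_inf_le_s12 A B C
  have hD := card_inf_mul_card_inf_le_s12 A B D
  have hCD := card_mul_card_le_card_mul_card_inf_s12 C D
  have hpos : 0 < Nat.card C * Nat.card D := Nat.mul_pos Nat.card_pos Nat.card_pos
  refine Nat.le_of_mul_le_mul_left ?_ hpos
  calc Nat.card C * Nat.card D * (Nat.card ↥(A ⊓ B) * Nat.card ↥(A ⊓ C) * Nat.card ↥(A ⊓ D) *
        Nat.card ↥(B ⊓ C) * Nat.card ↥(B ⊓ D))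
      = Nat.card ↥(A ⊓ B) * ((Nat.card ↥(A ⊓ C) * Nat.card ↥(B ⊓ C)) *
          (Nat.card ↥(A ⊓ D) * Nat.card ↥(B ⊓ D)) * (Nat.card C * Nat.card D)) := by ring
    _ ≤ Nat.card ↥(A ⊓ B) * ((Nat.card C * Nat.card ↥(A ⊓ B ⊓ C)) *
          (Nat.card D * Nat.card ↥(A ⊓ B ⊓ D)) * (Nat.card G * Nat.card ↥(C ⊓ D))) := by gcongr
    _ = Nat.card C * Nat.card D * (Nat.card G * Nat.card ↥(A ⊓ B) * Nat.card ↥(C ⊓ D) *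
          Nat.card ↥(A ⊓ B ⊓ C) * Nat.card ↥(A ⊓ B ⊓ D)) := by ring
    _ = Nat.card C * Nat.card D * (Nat.card A * Nat.card B * Nat.card ↥(C ⊓ D) *
          Nat.card ↥(A ⊓ B ⊓ C) * Nat.card ↥(A ⊓ B ⊓ D)) := by rw [← hAB]

theorem ingletonInequality_of_isIndependent_right {A C : Subgroup G} (hAC : IsIndependent A C)
    (B D : Subgroup G) : IngletonInequality A B C D := by
  have hB : Nat.card ↥(A ⊓ B) * Nat.card ↥(B ⊓ C) ≤ Nat.card B * Nat.card ↥(A ⊓ B ⊓ C) := by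
    simpa only [inf_comm C B, inf_right_comm A C B] using card_inf_mul_card_inf_le_s12 A C B
  have hD := card_inf_mul_card_inf_le_s12 A B D
  have hCD := card_mul_card_le_card_mul_card_inf_s12 C D
  have hpos : 0 < Nat.card G * Nat.card D := Nat.mul_pos Nat.card_pos Nat.card_pos
  refine Nat.le_of_mul_le_mul_left ?_ hpos
  calc Nat.card G * Nat.card D * (Nat.card ↥(A ⊓ B) * Nat.card ↥(A ⊓ C) * Nat.card ↥(A ⊓ D) *
        Nat.card ↥(B ⊓ C) * Nat.card ↥(B ⊓ D))
      = (Nat.card ↥(A ⊓ B) * Nat.card ↥(B ⊓ C)) * (Nat.card ↥(A ⊓ D) * Nat.card ↥(B ⊓ D)) *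
          (Nat.card G * Nat.card ↥(A ⊓ C)) * Nat.card D := by ring
    _ = (Nat.card ↥(A ⊓ B) * Nat.card ↥(B ⊓ C)) * (Nat.card ↥(A ⊓ D) * Nat.card ↥(B ⊓ D)) *
          Nat.card A * (Nat.card C * Nat.card D) := by rw [← hAC]; ring
    _ ≤ (Nat.card B * Nat.card ↥(A ⊓ B ⊓ C)) * (Nat.card D * Nat.card ↥(A ⊓ B ⊓ D)) *
          Nat.card A * (Nat.card G * Nat.card ↥(C ⊓ D)) := by gcongr
    _ = Nat.card G * Nat.card D * (Nat.card A * Nat.card B * Nat.card ↥(C ⊓ D) *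
          Nat.card ↥(A ⊓ B ⊓ C) * Nat.card ↥(A ⊓ B ⊓ D)) := by ring

end Subgroup

open Subgroup

/-- If some pair of the four subgroups with distinct indices `i, j`,
`{i,j} ≠ {3,4}` (here `{2,3}` in 0-indexed notation), is independent, then the
Ingleton inequality holds for `(H 0, H 1, H 2, H 3)`. -/
theorem stmt12 (G : Type*) [Group G] [Finite G] (H : Fin 4 → Subgroup G)
    (i j : Fin 4) (hij : i ≠ j) (hnot34 : ({i, j} : Finset (Fin 4)) ≠ {2, 3})
    (hindep : Nat.card (H i) * Nat.card (H j) = Nat.card G * Nat.card (H i ⊓ H j : Subgroup G)) :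
    Nat.card (H 0) * Nat.card (H 1) * Nat.card (H 2 ⊓ H 3 : Subgroup G) *
        Nat.card (H 0 ⊓ H 1 ⊓ H 2 : Subgroup G) * Nat.card (H 0 ⊓ H 1 ⊓ H 3 : Subgroup G) ≥
      Nat.card (H 0 ⊓ H 1 : Subgroup G) * Nat.card (H 0 ⊓ H 2 : Subgroup G) *
        Nat.card (H 0 ⊓ H 3 : Subgroup G) * Nat.card (H 1 ⊓ H 2 : Subgroup G) *
        Nat.card (H 1 ⊓ H 3 : Subgroup G) := by
  change IsIndependent (H i) (H j) at hindep
  change IngletonInequality (H 0) (H 1) (H 2) (H 3)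
  wlog hlt : i < j generalizing i j
  · exact this j i hij.symm (by rwa [Finset.pair_comm]) hindep.symm (by omega)
  obtain ⟨rfl, rfl⟩ | ⟨rfl, rfl⟩ | ⟨rfl, rfl⟩ | ⟨rfl, rfl⟩ | ⟨rfl, rfl⟩ | ⟨rfl, rfl⟩ :
      (i = 0 ∧ j = 1) ∨ (i = 0 ∧ j = 2) ∨ (i = 0 ∧ j = 3) ∨ (i = 1 ∧ j = 2) ∨
        (i = 1 ∧ j = 3) ∨ (i = 2 ∧ j = 3) := by omega
  · exact ingletonInequality_of_isIndependent_left hindep _ _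
  · exact ingletonInequality_of_isIndependent_right hindep _ _
  · exact (ingletonInequality_of_isIndependent_right hindep _ _).swap_right
  · exact (ingletonInequality_of_isIndependent_right hindep _ _).swap_left
  · exact (ingletonInequality_of_isIndependent_right hindep _ _).swap_right.swap_left
  · exact absurd rfl hnot34
end

section
/- Let G be a finite group acting 2-transitively on a finite set Ω with |Ω| = l ≥ 3 (i.e., G is transitive on ordered pairs of distinct points of Ω). Let α, β, γ be three distinct points of Ω, set Δ = {α, β, γ}, and assume that the setwise stabilizer of Δ in G induces the full symmetric group on Δ (every permutation of Δ is realized by some element of G stabilizing Δ setwise). Let c be the cardinality of the orbit of γ under the pointwise stabilizer G_{α,β} of α and β. Define G₁ = the setwise stabilizer of Δ, G₂ = the stabilizer of α, G₃ = the setwise stabilizer of {α,β}, and G₄ = the setwise stabilizer of {α,γ}. Then the Ingleton inequality |G₁|·|G₂|·|G₃₄|·|G₁₂₃|·|G₁₂₄| ≥ |G₁₂|·|G₁₃|·|G₁₄|·|G₂₃|·|G₂₄| fails for (G₁,G₂,G₃,G₄) if and only if 3(l−1) < 4c. -/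
open Pointwise

lemma orbStab (G Ω : Type*) [Group G] [Finite G] [Finite Ω] [MulAction G Ω]
    (P : Subgroup G) (a : Ω) :
    Nat.card P = Nat.card (MulAction.orbit P a) *
      Nat.card (P ⊓ MulAction.stabilizer G a : Subgroup G) := by
  have h1 : Nat.card (MulAction.orbit P a) * Nat.card (MulAction.stabilizer P a)
      = Nat.card P := by
    rw [← Nat.card_prod]
    exact Nat.card_congr (MulAction.orbitProdStabilizerEquivGroup P a)
  rw [← h1]
  congr 1
  apply Nat.card_congr
  exact { toFun := fun x => ⟨x.1.1, x.1.2, x.2⟩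
          invFun := fun y => ⟨⟨y.1, y.2.1⟩, y.2.2⟩
          left_inv := fun x => rfl
          right_inv := fun y => rfl }

lemma cardCompl (Ω : Type*) [Finite Ω] (a : Ω) :
    Nat.card ({x : Ω | x ≠ a}) = Nat.card Ω - 1 := by
  have h : ({x : Ω | x ≠ a}) = ({a} : Set Ω)ᶜ := rfl
  rw [h, Nat.card_coe_set_eq]
  have := Set.ncard_add_ncard_compl ({a} : Set Ω)
  simp [Set.ncard_singleton] at this
  omega

/-- For a finite group `G` acting 2-transitively on `Ω` with `|Ω| = l ≥ 3`, and
three distinct points `α, β, γ` such that the setwise stabilizer of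
`Δ = {α,β,γ}` induces the full symmetric group on `Δ`, with
`G₁ = N_G(Δ)`, `G₂ = G_α`, `G₃ = N_G({α,β})`, `G₄ = N_G({α,γ})`, and `c` the
length of the orbit of `γ` under the pointwise stabilizer `G_{α,β}`, the
Ingleton inequality fails for `(G₁,G₂,G₃,G₄)` if and only if `3(l−1) < 4c`. -/
theorem stmt18 (G Ω : Type*) [Group G] [Finite G] [Finite Ω] [MulAction G Ω]
    (hl : 3 ≤ Nat.card Ω)
    (h2t : ∀ a b c d : Ω, a ≠ b → c ≠ d → ∃ g : G, g • a = c ∧ g • b = d)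
    (α β γ : Ω) (hαβ : α ≠ β) (hαγ : α ≠ γ) (hβγ : β ≠ γ)
    (hsym : ∀ σ : Equiv.Perm (Fin 3), ∃ g : G,
      ∀ i : Fin 3, g • (![α, β, γ] i) = ![α, β, γ] (σ i))
    (c : ℕ)
    (hc : c = Nat.card
      (MulAction.orbit (MulAction.stabilizer G α ⊓ MulAction.stabilizer G β : Subgroup G) γ))
    (G₁ G₂ G₃ G₄ : Subgroup G)
    (h₁ : G₁ = MulAction.stabilizer G ({α, β, γ} : Set Ω))
    (h₂ : G₂ = MulAction.stabilizer G α)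
    (h₃ : G₃ = MulAction.stabilizer G ({α, β} : Set Ω))
    (h₄ : G₄ = MulAction.stabilizer G ({α, γ} : Set Ω)) :
    (¬(Nat.card G₁ * Nat.card G₂ * Nat.card (G₃ ⊓ G₄ : Subgroup G) *
          Nat.card (G₁ ⊓ G₂ ⊓ G₃ : Subgroup G) * Nat.card (G₁ ⊓ G₂ ⊓ G₄ : Subgroup G) ≥
        Nat.card (G₁ ⊓ G₂ : Subgroup G) * Nat.card (G₁ ⊓ G₃ : Subgroup G) *
          Nat.card (G₁ ⊓ G₄ : Subgroup G) * Nat.card (G₂ ⊓ G₃ : Subgroup G) *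
          Nat.card (G₂ ⊓ G₄ : Subgroup G))) ↔
      3 * (Nat.card Ω - 1) < 4 * c := by
  classical
  subst h₁ h₂ h₃ h₄
  -- abbreviations
  have spair : ∀ (g : G) (a b : Ω), g • ({a, b} : Set Ω) = {g • a, g • b} := by
    intro g a b; rw [Set.smul_set_insert, Set.smul_set_singleton]
  have striple : ∀ (g : G) (a b d : Ω), g • ({a, b, d} : Set Ω) = {g • a, g • b, g • d} := by
    intro g a b d; rw [Set.smul_set_insert, Set.smul_set_insert, Set.smul_set_singleton]
  have himg : ∀ {g : G} {s : Set Ω} {x : Ω},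
      g ∈ MulAction.stabilizer G s → x ∈ s → g • x ∈ s := by
    intro g s x hg hx
    rw [MulAction.mem_stabilizer_iff] at hg
    rw [← hg]; exact Set.smul_mem_smul_set hx
  have hinj : ∀ (g : G) {x y : Ω}, g • x = g • y → x = y := fun g {x y} h => MulAction.injective g h
  -- special elements
  obtain ⟨tab, htab⟩ := hsym (Equiv.swap 0 1)
  have tabα : tab • α = β := by simpa using htab 0
  have tabβ : tab • β = α := by simpa using htab 1
  have tabγ : tab • γ = γ := by simpa [Equiv.swap_apply_of_ne_of_ne] using htab 2
  obtain ⟨tac, htac⟩ := hsym (Equiv.swap 0 2)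
  have tacα : tac • α = γ := by simpa using htac 0
  have tacβ : tac • β = β := by simpa [Equiv.swap_apply_of_ne_of_ne] using htac 1
  have tacγ : tac • γ = α := by simpa using htac 2
  obtain ⟨tbc, htbc⟩ := hsym (Equiv.swap 1 2)
  have tbcα : tbc • α = α := by simpa [Equiv.swap_apply_of_ne_of_ne] using htbc 0
  have tbcβ : tbc • β = γ := by simpa using htbc 1
  have tbcγ : tbc • γ = β := by simpa using htbc 2
  -- memberships of special elements
  have tabS1 : tab ∈ MulAction.stabilizer G ({α, β, γ} : Set Ω) := by
    rw [MulAction.mem_stabilizer_iff, striple, tabα, tabβ, tabγ]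
    exact Set.insert_comm β α {γ}
  have tacS1 : tac ∈ MulAction.stabilizer G ({α, β, γ} : Set Ω) := by
    rw [MulAction.mem_stabilizer_iff, striple, tacα, tacβ, tacγ]
    ext x; simp; tauto
  have tbcS1 : tbc ∈ MulAction.stabilizer G ({α, β, γ} : Set Ω) := by
    rw [MulAction.mem_stabilizer_iff, striple, tbcα, tbcβ, tbcγ]
    ext x; simp; tauto
  have tabS3 : tab ∈ MulAction.stabilizer G ({α, β} : Set Ω) := by
    rw [MulAction.mem_stabilizer_iff, spair, tabα, tabβ]
    exact Set.pair_comm β α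
  have tacS4 : tac ∈ MulAction.stabilizer G ({α, γ} : Set Ω) := by
    rw [MulAction.mem_stabilizer_iff, spair, tacα, tacγ]
    exact Set.pair_comm γ α
  have tbcS2 : tbc ∈ MulAction.stabilizer G α := MulAction.mem_stabilizer_iff.mpr tbcα
  -- K and its characterization
  have memK : ∀ g : G,
      g ∈ (MulAction.stabilizer G α ⊓ MulAction.stabilizer G β ⊓ MulAction.stabilizer G γ :
        Subgroup G) ↔ g • α = α ∧ g • β = β ∧ g • γ = γ := by
    intro g
    simp [Subgroup.mem_inf, MulAction.mem_stabilizer_iff, and_assoc]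
  -- subgroup equalities
  have eq23 : (MulAction.stabilizer G ({α, β, γ} : Set Ω) ⊓ MulAction.stabilizer G α ⊓
        MulAction.stabilizer G ({α, β} : Set Ω) : Subgroup G)
      = MulAction.stabilizer G α ⊓ MulAction.stabilizer G β ⊓ MulAction.stabilizer G γ := by
    ext g
    rw [Subgroup.mem_inf, Subgroup.mem_inf, memK]
    constructor
    · rintro ⟨⟨hg1, hg2⟩, hg3⟩
      have hgα : g • α = α := hg2
      have hβ : g • β ∈ ({α, β} : Set Ω) := himg hg3 (by simp)
      have hgβ : g • β = β := by
        rcases hβ with h | h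
        · exact absurd (hinj g (h.trans hgα.symm)) (Ne.symm hαβ)
        · exact h
      have hγ : g • γ ∈ ({α, β, γ} : Set Ω) := himg hg1 (by simp)
      have hgγ : g • γ = γ := by
        rcases hγ with h | h | h
        · exact absurd (hinj g (h.trans hgα.symm)) (Ne.symm hαγ)
        · exact absurd (hinj g (h.trans hgβ.symm)) (Ne.symm hβγ)
        · exact h
      exact ⟨hgα, hgβ, hgγ⟩
    · rintro ⟨h1, h2, h3⟩
      refine ⟨⟨?_, h1⟩, ?_⟩
      · rw [MulAction.mem_stabilizer_iff, striple, h1, h2, h3]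
      · rw [MulAction.mem_stabilizer_iff, spair, h1, h2]
  have memS : ∀ g : G, g ∈ MulAction.stabilizer G α ↔ g • α = α := fun g => MulAction.mem_stabilizer_iff
  -- more subgroup equalities
  have eq24 : (MulAction.stabilizer G ({α, β, γ} : Set Ω) ⊓ MulAction.stabilizer G α ⊓ MulAction.stabilizer G ({α, γ} : Set Ω) : Subgroup G) = (MulAction.stabilizer G α ⊓ MulAction.stabilizer G β ⊓ MulAction.stabilizer G γ : Subgroup G) := by
    ext g
    rw [Subgroup.mem_inf, Subgroup.mem_inf, memK]
    constructor
    · rintro ⟨⟨hg1, hg2⟩, hg4⟩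
      have hgα : g • α = α := hg2
      have hγ : g • γ ∈ ({α, γ} : Set Ω) := himg hg4 (by simp)
      have hgγ : g • γ = γ := by
        rcases hγ with h | h
        · exact absurd (hinj g (h.trans hgα.symm)) (Ne.symm hαγ)
        · exact h
      have hβ : g • β ∈ ({α, β, γ} : Set Ω) := himg hg1 (by simp)
      have hgβ : g • β = β := by
        rcases hβ with h | h | h
        · exact absurd (hinj g (h.trans hgα.symm)) (Ne.symm hαβ)
        · exact h
        · exact absurd (hinj g (h.trans hgγ.symm)) hβγ
      exact ⟨hgα, hgβ, hgγ⟩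
    · rintro ⟨h1, h2, h3⟩
      refine ⟨⟨?_, h1⟩, ?_⟩
      · rw [MulAction.mem_stabilizer_iff, striple, h1, h2, h3]
      · rw [MulAction.mem_stabilizer_iff, spair, h1, h3]
  have eq34 : (MulAction.stabilizer G ({α, β} : Set Ω) ⊓ MulAction.stabilizer G ({α, γ} : Set Ω) : Subgroup G) = (MulAction.stabilizer G α ⊓ MulAction.stabilizer G β ⊓ MulAction.stabilizer G γ : Subgroup G) := by
    ext g
    rw [Subgroup.mem_inf, memK]
    constructor
    · rintro ⟨hg3, hg4⟩
      have hα1 : g • α ∈ ({α, β} : Set Ω) := himg hg3 (by simp)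
      have hα2 : g • α ∈ ({α, γ} : Set Ω) := himg hg4 (by simp)
      have hgα : g • α = α := by
        rcases hα1 with h | h
        · exact h
        · rcases hα2 with h' | h'
          · exact h'
          · exact absurd (h.symm.trans h') hβγ
      have hβ : g • β ∈ ({α, β} : Set Ω) := himg hg3 (by simp)
      have hgβ : g • β = β := by
        rcases hβ with h | h
        · exact absurd (hinj g (h.trans hgα.symm)) (Ne.symm hαβ)
        · exact h
      have hγ : g • γ ∈ ({α, γ} : Set Ω) := himg hg4 (by simp)
      have hgγ : g • γ = γ := by
        rcases hγ with h | h
        · exact absurd (hinj g (h.trans hgα.symm)) (Ne.symm hαγ)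
        · exact h
      exact ⟨hgα, hgβ, hgγ⟩
    · rintro ⟨h1, h2, h3⟩
      constructor
      · rw [MulAction.mem_stabilizer_iff, spair, h1, h2]
      · rw [MulAction.mem_stabilizer_iff, spair, h1, h3]
  have eqH : (MulAction.stabilizer G α ⊓ MulAction.stabilizer G ({α, β} : Set Ω) : Subgroup G) = MulAction.stabilizer G α ⊓ MulAction.stabilizer G β := by
    ext g
    rw [Subgroup.mem_inf, Subgroup.mem_inf]
    constructor
    · rintro ⟨hg2, hg3⟩
      have hgα : g • α = α := hg2
      have hβ : g • β ∈ ({α, β} : Set Ω) := himg hg3 (by simp)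
      refine ⟨hg2, ?_⟩
      show g • β = β
      rcases hβ with h | h
      · exact absurd (hinj g (h.trans hgα.symm)) (Ne.symm hαβ)
      · exact h
    · rintro ⟨hg2, hgb⟩
      refine ⟨hg2, ?_⟩
      have h1 : g • α = α := hg2
      have h2 : g • β = β := hgb
      rw [MulAction.mem_stabilizer_iff, spair, h1, h2]
  have eqG : (MulAction.stabilizer G α ⊓ MulAction.stabilizer G ({α, γ} : Set Ω) : Subgroup G) = MulAction.stabilizer G α ⊓ MulAction.stabilizer G γ := by
    ext g
    rw [Subgroup.mem_inf, Subgroup.mem_inf]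
    constructor
    · rintro ⟨hg2, hg4⟩
      have hgα : g • α = α := hg2
      have hγ : g • γ ∈ ({α, γ} : Set Ω) := himg hg4 (by simp)
      refine ⟨hg2, ?_⟩
      show g • γ = γ
      rcases hγ with h | h
      · exact absurd (hinj g (h.trans hgα.symm)) (Ne.symm hαγ)
      · exact h
    · rintro ⟨hg2, hgg⟩
      refine ⟨hg2, ?_⟩
      have h1 : g • α = α := hg2
      have h3 : g • γ = γ := hgg
      rw [MulAction.mem_stabilizer_iff, spair, h1, h3]
  have eqstb12 : ((MulAction.stabilizer G ({α, β, γ} : Set Ω) ⊓ MulAction.stabilizer G α : Subgroup G) ⊓ MulAction.stabilizer G β : Subgroup G) = (MulAction.stabilizer G α ⊓ MulAction.stabilizer G β ⊓ MulAction.stabilizer G γ : Subgroup G) := by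
    ext g
    rw [Subgroup.mem_inf, Subgroup.mem_inf, memK]
    constructor
    · rintro ⟨⟨hg1, hg2⟩, hgb⟩
      have hgα : g • α = α := hg2
      have hgβ : g • β = β := hgb
      have hγ : g • γ ∈ ({α, β, γ} : Set Ω) := himg hg1 (by simp)
      have hgγ : g • γ = γ := by
        rcases hγ with h | h | h
        · exact absurd (hinj g (h.trans hgα.symm)) (Ne.symm hαγ)
        · exact absurd (hinj g (h.trans hgβ.symm)) (Ne.symm hβγ)
        · exact h
      exact ⟨hgα, hgβ, hgγ⟩
    · rintro ⟨h1, h2, h3⟩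
      refine ⟨⟨?_, h1⟩, h2⟩
      rw [MulAction.mem_stabilizer_iff, striple, h1, h2, h3]
  have eqst13 : ((MulAction.stabilizer G ({α, β, γ} : Set Ω) ⊓ MulAction.stabilizer G ({α, β} : Set Ω) : Subgroup G) ⊓ MulAction.stabilizer G α : Subgroup G) = (MulAction.stabilizer G α ⊓ MulAction.stabilizer G β ⊓ MulAction.stabilizer G γ : Subgroup G) := by
    rw [inf_right_comm]; exact eq23
  have eqst14 : ((MulAction.stabilizer G ({α, β, γ} : Set Ω) ⊓ MulAction.stabilizer G ({α, γ} : Set Ω) : Subgroup G) ⊓ MulAction.stabilizer G α : Subgroup G) = (MulAction.stabilizer G α ⊓ MulAction.stabilizer G β ⊓ MulAction.stabilizer G γ : Subgroup G) := by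
    rw [inf_right_comm]; exact eq24
  -- orbit computations
  have o2β : MulAction.orbit (MulAction.stabilizer G α : Subgroup G) β = {x : Ω | x ≠ α} := by
    ext x
    constructor
    · rintro ⟨g, rfl⟩
      have hgα : (g : G) • α = α := g.2
      intro h
      exact hαβ (hinj (g : G) ((show (g : G) • β = α from h).trans hgα.symm)).symm
    · intro hx
      obtain ⟨g, hgα, hgβ⟩ := h2t α β α x hαβ (Ne.symm hx)
      exact ⟨⟨g, MulAction.mem_stabilizer_iff.mpr hgα⟩, hgβ⟩
  have o2γ : MulAction.orbit (MulAction.stabilizer G α : Subgroup G) γ = {x : Ω | x ≠ α} := by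
    ext x
    constructor
    · rintro ⟨g, rfl⟩
      have hgα : (g : G) • α = α := g.2
      intro h
      exact hαγ (hinj (g : G) ((show (g : G) • γ = α from h).trans hgα.symm)).symm
    · intro hx
      obtain ⟨g, hgα, hgγ⟩ := h2t α γ α x hαγ (Ne.symm hx)
      exact ⟨⟨g, MulAction.mem_stabilizer_iff.mpr hgα⟩, hgγ⟩
  have o1α : MulAction.orbit (MulAction.stabilizer G ({α, β, γ} : Set Ω) : Subgroup G) α = ({α, β, γ} : Set Ω) := by
    ext x
    constructor
    · rintro ⟨g, rfl⟩
      exact himg g.2 (by simp)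
    · rintro (rfl | rfl | rfl)
      · exact MulAction.mem_orbit_self _
      · exact ⟨⟨tab, tabS1⟩, tabα⟩
      · exact ⟨⟨tac, tacS1⟩, tacα⟩
  have o12β : MulAction.orbit ((MulAction.stabilizer G ({α, β, γ} : Set Ω) ⊓ MulAction.stabilizer G α : Subgroup G)) β = ({β, γ} : Set Ω) := by
    ext x
    constructor
    · rintro ⟨g, rfl⟩
      have hgα : (g : G) • α = α := g.2.2
      have hβ : (g : G) • β ∈ ({α, β, γ} : Set Ω) := himg g.2.1 (by simp)
      rcases hβ with h | h | h
      · exact absurd (hinj (g : G) (h.trans hgα.symm)) (Ne.symm hαβ)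
      · exact Or.inl h
      · exact Or.inr h
    · rintro (rfl | rfl)
      · exact MulAction.mem_orbit_self _
      · exact ⟨⟨tbc, ⟨tbcS1, tbcS2⟩⟩, tbcβ⟩
  have o13α : MulAction.orbit ((MulAction.stabilizer G ({α, β, γ} : Set Ω) ⊓ MulAction.stabilizer G ({α, β} : Set Ω) : Subgroup G)) α = ({α, β} : Set Ω) := by
    ext x
    constructor
    · rintro ⟨g, rfl⟩
      exact himg g.2.2 (by simp)
    · rintro (rfl | rfl)
      · exact MulAction.mem_orbit_self _
      · exact ⟨⟨tab, ⟨tabS1, tabS3⟩⟩, tabα⟩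
  have o14α : MulAction.orbit ((MulAction.stabilizer G ({α, β, γ} : Set Ω) ⊓ MulAction.stabilizer G ({α, γ} : Set Ω) : Subgroup G)) α = ({α, γ} : Set Ω) := by
    ext x
    constructor
    · rintro ⟨g, rfl⟩
      exact himg g.2.2 (by simp)
    · rintro (rfl | rfl)
      · exact MulAction.mem_orbit_self _
      · exact ⟨⟨tac, ⟨tacS1, tacS4⟩⟩, tacα⟩
  -- cardinalities
  have cardΔ : Nat.card (({α, β, γ} : Set Ω)) = 3 := by
    rw [Nat.card_coe_set_eq, Set.ncard_insert_of_notMem (by simp [hαβ, hαγ]),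
      Set.ncard_pair hβγ]
  have n12 : Nat.card ((MulAction.stabilizer G ({α, β, γ} : Set Ω) ⊓ MulAction.stabilizer G α : Subgroup G)) = 2 * Nat.card (MulAction.stabilizer G α ⊓ MulAction.stabilizer G β ⊓ MulAction.stabilizer G γ : Subgroup G) := by
    have h := orbStab G Ω (MulAction.stabilizer G ({α, β, γ} : Set Ω) ⊓ MulAction.stabilizer G α : Subgroup G) β
    rw [o12β, eqstb12] at h
    rw [h, Nat.card_coe_set_eq, Set.ncard_pair hβγ]
  have n1 : Nat.card (MulAction.stabilizer G ({α, β, γ} : Set Ω) : Subgroup G) = 6 * Nat.card (MulAction.stabilizer G α ⊓ MulAction.stabilizer G β ⊓ MulAction.stabilizer G γ : Subgroup G) := by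
    have h := orbStab G Ω (MulAction.stabilizer G ({α, β, γ} : Set Ω) : Subgroup G) α
    rw [o1α, n12] at h
    rw [h, cardΔ]
    ring
  have n13 : Nat.card ((MulAction.stabilizer G ({α, β, γ} : Set Ω) ⊓ MulAction.stabilizer G ({α, β} : Set Ω) : Subgroup G)) = 2 * Nat.card (MulAction.stabilizer G α ⊓ MulAction.stabilizer G β ⊓ MulAction.stabilizer G γ : Subgroup G) := by
    have h := orbStab G Ω (MulAction.stabilizer G ({α, β, γ} : Set Ω) ⊓ MulAction.stabilizer G ({α, β} : Set Ω) : Subgroup G) α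
    rw [o13α, eqst13] at h
    rw [h, Nat.card_coe_set_eq, Set.ncard_pair hαβ]
  have n14 : Nat.card ((MulAction.stabilizer G ({α, β, γ} : Set Ω) ⊓ MulAction.stabilizer G ({α, γ} : Set Ω) : Subgroup G)) = 2 * Nat.card (MulAction.stabilizer G α ⊓ MulAction.stabilizer G β ⊓ MulAction.stabilizer G γ : Subgroup G) := by
    have h := orbStab G Ω (MulAction.stabilizer G ({α, β, γ} : Set Ω) ⊓ MulAction.stabilizer G ({α, γ} : Set Ω) : Subgroup G) α
    rw [o14α, eqst14] at h
    rw [h, Nat.card_coe_set_eq, Set.ncard_pair hαγ]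
  have n2 : Nat.card (MulAction.stabilizer G α : Subgroup G)
      = (Nat.card Ω - 1) * Nat.card (MulAction.stabilizer G α ⊓ MulAction.stabilizer G β : Subgroup G) := by
    have h := orbStab G Ω (MulAction.stabilizer G α : Subgroup G) β
    rw [o2β] at h
    rw [h, cardCompl]
  have n24 : Nat.card ((MulAction.stabilizer G α ⊓ MulAction.stabilizer G ({α, γ} : Set Ω) : Subgroup G)) = Nat.card (MulAction.stabilizer G α ⊓ MulAction.stabilizer G β : Subgroup G) := by
    have h := orbStab G Ω (MulAction.stabilizer G α : Subgroup G) γ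
    rw [o2γ, cardCompl] at h
    rw [eqG]
    exact Nat.eq_of_mul_eq_mul_left (show 0 < Nat.card Ω - 1 by omega)
      (h.symm.trans n2)
  have n23 : Nat.card ((MulAction.stabilizer G α ⊓ MulAction.stabilizer G ({α, β} : Set Ω) : Subgroup G)) = Nat.card (MulAction.stabilizer G α ⊓ MulAction.stabilizer G β : Subgroup G) := by
    rw [eqH]
  have n34 : Nat.card ((MulAction.stabilizer G ({α, β} : Set Ω) ⊓ MulAction.stabilizer G ({α, γ} : Set Ω) : Subgroup G)) = Nat.card (MulAction.stabilizer G α ⊓ MulAction.stabilizer G β ⊓ MulAction.stabilizer G γ : Subgroup G) := by rw [eq34]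
  have n123 : Nat.card ((MulAction.stabilizer G ({α, β, γ} : Set Ω) ⊓ MulAction.stabilizer G α ⊓ MulAction.stabilizer G ({α, β} : Set Ω) : Subgroup G)) = Nat.card (MulAction.stabilizer G α ⊓ MulAction.stabilizer G β ⊓ MulAction.stabilizer G γ : Subgroup G) := by rw [eq23]
  have n124 : Nat.card ((MulAction.stabilizer G ({α, β, γ} : Set Ω) ⊓ MulAction.stabilizer G α ⊓ MulAction.stabilizer G ({α, γ} : Set Ω) : Subgroup G)) = Nat.card (MulAction.stabilizer G α ⊓ MulAction.stabilizer G β ⊓ MulAction.stabilizer G γ : Subgroup G) := by rw [eq24]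
  have nH : Nat.card (MulAction.stabilizer G α ⊓ MulAction.stabilizer G β : Subgroup G) = c * Nat.card (MulAction.stabilizer G α ⊓ MulAction.stabilizer G β ⊓ MulAction.stabilizer G γ : Subgroup G) := by
    have h := orbStab G Ω (MulAction.stabilizer G α ⊓ MulAction.stabilizer G β : Subgroup G) γ
    rw [h, ← hc]
  have hkpos : 0 < Nat.card (MulAction.stabilizer G α ⊓ MulAction.stabilizer G β ⊓ MulAction.stabilizer G γ : Subgroup G) := Nat.card_pos
  have hcpos : 0 < c := by
    rw [hc]
    haveI : Nonempty (MulAction.orbit ((MulAction.stabilizer G α ⊓ MulAction.stabilizer G β : Subgroup G)) γ) :=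
      ⟨⟨γ, MulAction.mem_orbit_self γ⟩⟩
    exact Nat.card_pos
  rw [ge_iff_le, not_le, n1, n2, n34, n123, n124, n12, n13, n14, n23, n24, nH]
  have hpos : 0 < c * Nat.card (MulAction.stabilizer G α ⊓ MulAction.stabilizer G β ⊓ MulAction.stabilizer G γ : Subgroup G) ^ 4 * Nat.card (MulAction.stabilizer G α ⊓ MulAction.stabilizer G β ⊓ MulAction.stabilizer G γ : Subgroup G) := by positivity
  rw [show 6 * Nat.card (MulAction.stabilizer G α ⊓ MulAction.stabilizer G β ⊓ MulAction.stabilizer G γ : Subgroup G) * ((Nat.card Ω - 1) * (c * Nat.card (MulAction.stabilizer G α ⊓ MulAction.stabilizer G β ⊓ MulAction.stabilizer G γ : Subgroup G))) * Nat.card (MulAction.stabilizer G α ⊓ MulAction.stabilizer G β ⊓ MulAction.stabilizer G γ : Subgroup G) *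
        Nat.card (MulAction.stabilizer G α ⊓ MulAction.stabilizer G β ⊓ MulAction.stabilizer G γ : Subgroup G) * Nat.card (MulAction.stabilizer G α ⊓ MulAction.stabilizer G β ⊓ MulAction.stabilizer G γ : Subgroup G)
      = (6 * (Nat.card Ω - 1)) * (c * Nat.card (MulAction.stabilizer G α ⊓ MulAction.stabilizer G β ⊓ MulAction.stabilizer G γ : Subgroup G) ^ 4 * Nat.card (MulAction.stabilizer G α ⊓ MulAction.stabilizer G β ⊓ MulAction.stabilizer G γ : Subgroup G)) from by ring,
    show 2 * Nat.card (MulAction.stabilizer G α ⊓ MulAction.stabilizer G β ⊓ MulAction.stabilizer G γ : Subgroup G) * (2 * Nat.card (MulAction.stabilizer G α ⊓ MulAction.stabilizer G β ⊓ MulAction.stabilizer G γ : Subgroup G)) * (2 * Nat.card (MulAction.stabilizer G α ⊓ MulAction.stabilizer G β ⊓ MulAction.stabilizer G γ : Subgroup G)) * (c * Nat.card (MulAction.stabilizer G α ⊓ MulAction.stabilizer G β ⊓ MulAction.stabilizer G γ : Subgroup G)) *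
        (c * Nat.card (MulAction.stabilizer G α ⊓ MulAction.stabilizer G β ⊓ MulAction.stabilizer G γ : Subgroup G))
      = (8 * c) * (c * Nat.card (MulAction.stabilizer G α ⊓ MulAction.stabilizer G β ⊓ MulAction.stabilizer G γ : Subgroup G) ^ 4 * Nat.card (MulAction.stabilizer G α ⊓ MulAction.stabilizer G β ⊓ MulAction.stabilizer G γ : Subgroup G)) from by ring,
    Nat.mul_lt_mul_right hpos]
  omega
end

section
/- Let G be a finite group acting 3-transitively on a finite set Ω with |Ω| > 5 (i.e., G is transitive on ordered triples of distinct points of Ω). Let α, β, γ be three distinct points of Ω and Δ = {α, β, γ}. Define G₁ = the setwise stabilizer of Δ, G₂ = the stabilizer of α, G₃ = the setwise stabilizer of {α,β}, and G₄ = the setwise stabilizer of {α,γ}. Then (G₁,G₂,G₃,G₄) violates the Ingleton inequality: |G₁|·|G₂|·|G₃₄|·|G₁₂₃|·|G₁₂₄| < |G₁₂|·|G₁₃|·|G₁₄|·|G₂₃|·|G₂₄|. -/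
open Pointwise

section Aux

variable {G Ω : Type*} [Group G] [MulAction G Ω]

lemma aux_card_eq (H : Subgroup G) (x : Ω) :
    Nat.card H = Nat.card (MulAction.orbit H x) *
      Nat.card (H ⊓ MulAction.stabilizer G x : Subgroup G) := by
  have e1 : Nat.card H = Nat.card (MulAction.orbit H x × MulAction.stabilizer H x) :=
    (Nat.card_congr (MulAction.orbitProdStabilizerEquivGroup H x)).symm
  rw [e1, Nat.card_prod]
  congr 1
  apply Nat.card_congr
  exact
  { toFun := fun s => ⟨(s : H), ⟨(s : H).2, s.2⟩⟩
    invFun := fun g => ⟨⟨g.1, g.2.1⟩, g.2.2⟩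
    left_inv := fun s => rfl
    right_inv := fun g => rfl }

end Aux

set_option maxHeartbeats 1600000 in
/-- For a finite group `G` acting 3-transitively on `Ω` with `|Ω| > 5`, and three
distinct points `α, β, γ`, the subgroups `G₁ = N_G({α,β,γ})`, `G₂ = G_α`,
`G₃ = N_G({α,β})`, `G₄ = N_G({α,γ})` violate the Ingleton inequality. -/
theorem stmt19 (G Ω : Type*) [Group G] [Finite G] [Finite Ω] [MulAction G Ω]
    (hl : 5 < Nat.card Ω)
    (h3t : ∀ a b c a' b' c' : Ω, a ≠ b → a ≠ c → b ≠ c → a' ≠ b' → a' ≠ c' → b' ≠ c' →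
      ∃ g : G, g • a = a' ∧ g • b = b' ∧ g • c = c')
    (α β γ : Ω) (hαβ : α ≠ β) (hαγ : α ≠ γ) (hβγ : β ≠ γ)
    (G₁ G₂ G₃ G₄ : Subgroup G)
    (h₁ : G₁ = MulAction.stabilizer G ({α, β, γ} : Set Ω))
    (h₂ : G₂ = MulAction.stabilizer G α)
    (h₃ : G₃ = MulAction.stabilizer G ({α, β} : Set Ω))
    (h₄ : G₄ = MulAction.stabilizer G ({α, γ} : Set Ω)) :
    Nat.card G₁ * Nat.card G₂ * Nat.card (G₃ ⊓ G₄ : Subgroup G) *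
        Nat.card (G₁ ⊓ G₂ ⊓ G₃ : Subgroup G) * Nat.card (G₁ ⊓ G₂ ⊓ G₄ : Subgroup G) <
      Nat.card (G₁ ⊓ G₂ : Subgroup G) * Nat.card (G₁ ⊓ G₃ : Subgroup G) *
        Nat.card (G₁ ⊓ G₄ : Subgroup G) * Nat.card (G₂ ⊓ G₃ : Subgroup G) *
        Nat.card (G₂ ⊓ G₄ : Subgroup G) := by
    classical
  set n := Nat.card Ω with hn
  -- basic tools
  have hinj : ∀ (g : G) (x y : Ω), g • x = g • y → x = y := fun g x y h =>
    MulAction.injective g h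
  have hfwd : ∀ (S : Set Ω) (g : G), g ∈ MulAction.stabilizer G S → ∀ x ∈ S, g • x ∈ S := by
    intro S g hg x hx
    have h1 := Set.smul_mem_smul_set (a := g) hx
    rwa [MulAction.mem_stabilizer_iff.mp hg] at h1
  have hstab2 : ∀ (g : G) (a b x y : Ω), g • a = x → g • b = y →
      ({x, y} : Set Ω) = {a, b} → g ∈ MulAction.stabilizer G ({a, b} : Set Ω) := by
    intro g a b x y hx hy hS
    rw [MulAction.mem_stabilizer_iff, Set.smul_set_insert, Set.smul_set_singleton, hx, hy, hS]
  have hstab3 : ∀ (g : G) (x y z : Ω), g • α = x → g • β = y → g • γ = z →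
      ({x, y, z} : Set Ω) = {α, β, γ} → g ∈ G₁ := by
    intro g x y z hx hy hz hS
    rw [h₁, MulAction.mem_stabilizer_iff, Set.smul_set_insert, Set.smul_set_insert,
      Set.smul_set_singleton, hx, hy, hz, hS]
  -- the key subgroups
  set K : Subgroup G :=
    MulAction.stabilizer G α ⊓ MulAction.stabilizer G β ⊓ MulAction.stabilizer G γ with hK
  set Sab : Subgroup G := MulAction.stabilizer G α ⊓ MulAction.stabilizer G β with hSab
  set Sac : Subgroup G := MulAction.stabilizer G α ⊓ MulAction.stabilizer G γ with hSac
  have hKmem : ∀ g : G, g ∈ K ↔ g • α = α ∧ g • β = β ∧ g • γ = γ := by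
    intro g
    simp only [hK, hSab, Subgroup.mem_inf, MulAction.mem_stabilizer_iff, and_assoc]
  have hKG₁ : ∀ g : G, g ∈ K → g ∈ G₁ := by
    intro g hg
    rw [hKmem] at hg
    exact hstab3 g α β γ hg.1 hg.2.1 hg.2.2 rfl
  -- pointwise membership in pair stabilizers
  have hmemab : ∀ g : G, g • α = α → g • β = β → g ∈ G₃ := by
    intro g ha hb; rw [h₃]; exact hstab2 g α β α β ha hb rfl
  have hmemac : ∀ g : G, g • α = α → g • γ = γ → g ∈ G₄ := by
    intro g ha hc; rw [h₄]; exact hstab2 g α γ α γ ha hc rfl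
  -- subgroup identities
  have E1 : G₃ ⊓ G₄ = K := by
    ext g
    constructor
    · intro hg
      obtain ⟨hg3, hg4⟩ := Subgroup.mem_inf.mp hg
      rw [h₃] at hg3; rw [h₄] at hg4
      have ha1 : g • α ∈ ({α, β} : Set Ω) := hfwd _ g hg3 α (by simp)
      have ha2 : g • α ∈ ({α, γ} : Set Ω) := hfwd _ g hg4 α (by simp)
      simp only [Set.mem_insert_iff, Set.mem_singleton_iff] at ha1 ha2
      have hgα : g • α = α := by
        rcases ha1 with h | h
        · exact h
        · rcases ha2 with h' | h'
          · exact h'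
          · exact absurd (h ▸ h') hβγ
      have hb1 : g • β ∈ ({α, β} : Set Ω) := hfwd _ g hg3 β (by simp)
      simp only [Set.mem_insert_iff, Set.mem_singleton_iff] at hb1
      have hgβ : g • β = β := by
        rcases hb1 with h | h
        · exact absurd (hinj g β α (h.trans hgα.symm)) (Ne.symm hαβ)
        · exact h
      have hc1 : g • γ ∈ ({α, γ} : Set Ω) := hfwd _ g hg4 γ (by simp)
      simp only [Set.mem_insert_iff, Set.mem_singleton_iff] at hc1
      have hgγ : g • γ = γ := by
        rcases hc1 with h | h
        · exact absurd (hinj g γ α (h.trans hgα.symm)) (Ne.symm hαγ)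
        · exact h
      exact (hKmem g).mpr ⟨hgα, hgβ, hgγ⟩
    · intro hg
      rw [hKmem] at hg
      exact Subgroup.mem_inf.mpr ⟨hmemab g hg.1 hg.2.1, hmemac g hg.1 hg.2.2⟩
  have E2 : G₁ ⊓ G₂ ⊓ G₃ = K := by
    ext g
    constructor
    · intro hg
      obtain ⟨hg12, hg3⟩ := Subgroup.mem_inf.mp hg
      obtain ⟨hg1, hg2⟩ := Subgroup.mem_inf.mp hg12
      replace hg2 : g • α = α := by rw [h₂] at hg2; exact hg2
      rw [h₃] at hg3
      have hb1 : g • β ∈ ({α, β} : Set Ω) := hfwd _ g hg3 β (by simp)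
      simp only [Set.mem_insert_iff, Set.mem_singleton_iff] at hb1
      have hgβ : g • β = β := by
        rcases hb1 with h | h
        · exact absurd (hinj g β α (h.trans hg2.symm)) (Ne.symm hαβ)
        · exact h
      rw [h₁] at hg1
      have hc1 : g • γ ∈ ({α, β, γ} : Set Ω) := hfwd _ g hg1 γ (by simp)
      simp only [Set.mem_insert_iff, Set.mem_singleton_iff] at hc1
      have hgγ : g • γ = γ := by
        rcases hc1 with h | h | h
        · exact absurd (hinj g γ α (h.trans hg2.symm)) (Ne.symm hαγ)
        · exact absurd (hinj g γ β (h.trans hgβ.symm)) (Ne.symm hβγ)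
        · exact h
      exact (hKmem g).mpr ⟨hg2, hgβ, hgγ⟩
    · intro hg
      have h' := (hKmem g).mp hg
      exact Subgroup.mem_inf.mpr ⟨Subgroup.mem_inf.mpr ⟨hKG₁ g hg, by rw [h₂]; exact h'.1⟩,
        hmemab g h'.1 h'.2.1⟩
  have E3 : G₁ ⊓ G₂ ⊓ G₄ = K := by
    ext g
    constructor
    · intro hg
      obtain ⟨hg12, hg4⟩ := Subgroup.mem_inf.mp hg
      obtain ⟨hg1, hg2⟩ := Subgroup.mem_inf.mp hg12
      replace hg2 : g • α = α := by rw [h₂] at hg2; exact hg2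
      rw [h₄] at hg4
      have hc1 : g • γ ∈ ({α, γ} : Set Ω) := hfwd _ g hg4 γ (by simp)
      simp only [Set.mem_insert_iff, Set.mem_singleton_iff] at hc1
      have hgγ : g • γ = γ := by
        rcases hc1 with h | h
        · exact absurd (hinj g γ α (h.trans hg2.symm)) (Ne.symm hαγ)
        · exact h
      rw [h₁] at hg1
      have hb1 : g • β ∈ ({α, β, γ} : Set Ω) := hfwd _ g hg1 β (by simp)
      simp only [Set.mem_insert_iff, Set.mem_singleton_iff] at hb1
      have hgβ : g • β = β := by
        rcases hb1 with h | h | h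
        · exact absurd (hinj g β α (h.trans hg2.symm)) (Ne.symm hαβ)
        · exact h
        · exact absurd (hinj g β γ (h.trans hgγ.symm)) hβγ
      exact (hKmem g).mpr ⟨hg2, hgβ, hgγ⟩
    · intro hg
      have h' := (hKmem g).mp hg
      exact Subgroup.mem_inf.mpr ⟨Subgroup.mem_inf.mpr ⟨hKG₁ g hg, by rw [h₂]; exact h'.1⟩,
        hmemac g h'.1 h'.2.2⟩
  have E4 : G₂ ⊓ G₃ = Sab := by
    ext g
    constructor
    · intro hg
      obtain ⟨hg2, hg3⟩ := Subgroup.mem_inf.mp hg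
      replace hg2 : g • α = α := by rw [h₂] at hg2; exact hg2
      rw [h₃] at hg3
      have hb1 : g • β ∈ ({α, β} : Set Ω) := hfwd _ g hg3 β (by simp)
      simp only [Set.mem_insert_iff, Set.mem_singleton_iff] at hb1
      have hgβ : g • β = β := by
        rcases hb1 with h | h
        · exact absurd (hinj g β α (h.trans hg2.symm)) (Ne.symm hαβ)
        · exact h
      exact Subgroup.mem_inf.mpr ⟨hg2, hgβ⟩
    · intro hg
      obtain ⟨ha, hb⟩ := Subgroup.mem_inf.mp hg
      replace ha : g • α = α := ha
      replace hb : g • β = β := hb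
      exact Subgroup.mem_inf.mpr ⟨by rw [h₂]; exact ha, hmemab g ha hb⟩
  have E5 : G₂ ⊓ G₄ = Sac := by
    ext g
    constructor
    · intro hg
      obtain ⟨hg2, hg4⟩ := Subgroup.mem_inf.mp hg
      replace hg2 : g • α = α := by rw [h₂] at hg2; exact hg2
      rw [h₄] at hg4
      have hc1 : g • γ ∈ ({α, γ} : Set Ω) := hfwd _ g hg4 γ (by simp)
      simp only [Set.mem_insert_iff, Set.mem_singleton_iff] at hc1
      have hgγ : g • γ = γ := by
        rcases hc1 with h | h
        · exact absurd (hinj g γ α (h.trans hg2.symm)) (Ne.symm hαγ)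
        · exact h
      exact Subgroup.mem_inf.mpr ⟨hg2, hgγ⟩
    · intro hg
      obtain ⟨ha, hc⟩ := Subgroup.mem_inf.mp hg
      replace ha : g • α = α := ha
      replace hc : g • γ = γ := hc
      exact Subgroup.mem_inf.mpr ⟨by rw [h₂]; exact ha, hmemac g ha hc⟩
  -- fourth point
  have hexists : ∀ a b c : Ω, ∃ d : Ω, d ≠ a ∧ d ≠ b ∧ d ≠ c := by
    intro a b c
    by_contra h
    push_neg at h
    have hsub : (Set.univ : Set Ω) ⊆ {a, b, c} := by
      intro x _
      by_cases h1 : x = a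
      · simp [h1]
      by_cases h2 : x = b
      · simp [h2]
      simp [h x h1 h2]
    have h1 : n = (Set.univ : Set Ω).ncard := by simp [hn, Set.ncard_univ]
    have h2 : (Set.univ : Set Ω).ncard ≤ ({a, b, c} : Set Ω).ncard :=
      Set.ncard_le_ncard hsub (Set.toFinite _)
    have h3 : ({a, b, c} : Set Ω).ncard ≤ 3 := by
      apply le_trans (Set.ncard_insert_le _ _)
      have h4 := Set.ncard_insert_le b ({c} : Set Ω)
      simp only [Set.ncard_singleton] at h4
      omega
    omega
  -- orbit computations
  have horb1 : MulAction.orbit G₁ α = ({α, β, γ} : Set Ω) := by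
    ext y
    constructor
    · rintro ⟨⟨g, hg⟩, rfl⟩
      exact hfwd _ g (h₁ ▸ hg) α (by simp)
    · intro hy
      simp only [Set.mem_insert_iff, Set.mem_singleton_iff] at hy
      rcases hy with hEq | hEq | hEq <;> rw [hEq]
      · exact MulAction.mem_orbit_self α
      · obtain ⟨g, hg1, hg2, hg3⟩ := h3t α β γ β α γ hαβ hαγ hβγ (Ne.symm hαβ) hβγ hαγ
        exact ⟨⟨g, hstab3 g β α γ hg1 hg2 hg3 (by ext t; simp; tauto)⟩, hg1⟩
      · obtain ⟨g, hg1, hg2, hg3⟩ := h3t α β γ γ β α hαβ hαγ hβγ (Ne.symm hβγ)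
          (Ne.symm hαγ) (Ne.symm hαβ)
        exact ⟨⟨g, hstab3 g γ β α hg1 hg2 hg3 (by ext t; simp; tauto)⟩, hg1⟩
  have horb2 : MulAction.orbit G₂ β = (({α} : Set Ω)ᶜ : Set Ω) := by
    ext y
    constructor
    · rintro ⟨⟨g, hg⟩, rfl⟩
      replace hg : g • α = α := by rw [h₂] at hg; exact hg
      simp only [Set.mem_compl_iff, Set.mem_singleton_iff]
      show g • β ≠ α
      intro h
      exact hαβ (hinj g α β (hg.trans h.symm))
    · intro hy
      have hyα : y ≠ α := by simpa using hy
      obtain ⟨c, hc1, hc2, hc3⟩ := hexists α β y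
      obtain ⟨g, hg1, hg2, _⟩ := h3t α β c α y c hαβ (Ne.symm hc1) (Ne.symm hc2)
        (Ne.symm hyα) (Ne.symm hc1) (Ne.symm hc3)
      exact ⟨⟨g, by rw [h₂]; exact hg1⟩, hg2⟩
  have horb3 : MulAction.orbit Sab γ = (({α, β} : Set Ω)ᶜ : Set Ω) := by
    ext y
    constructor
    · rintro ⟨⟨g, hg⟩, rfl⟩
      obtain ⟨ha, hb⟩ := Subgroup.mem_inf.mp hg
      replace ha : g • α = α := ha
      replace hb : g • β = β := hb
      simp only [Set.mem_compl_iff, Set.mem_insert_iff, Set.mem_singleton_iff, not_or]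
      constructor
      · show g • γ ≠ α
        intro h; exact hαγ (hinj g α γ (ha.trans h.symm))
      · show g • γ ≠ β
        intro h; exact hβγ (hinj g β γ (hb.trans h.symm))
    · intro hy
      simp only [Set.mem_compl_iff, Set.mem_insert_iff, Set.mem_singleton_iff, not_or] at hy
      obtain ⟨g, hg1, hg2, hg3⟩ := h3t α β γ α β y hαβ hαγ hβγ hαβ
        (Ne.symm hy.1) (Ne.symm hy.2)
      exact ⟨⟨g, Subgroup.mem_inf.mpr ⟨hg1, hg2⟩⟩, hg3⟩
  have horb4 : MulAction.orbit Sac β = (({α, γ} : Set Ω)ᶜ : Set Ω) := by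
    ext y
    constructor
    · rintro ⟨⟨g, hg⟩, rfl⟩
      obtain ⟨ha, hc⟩ := Subgroup.mem_inf.mp hg
      replace ha : g • α = α := ha
      replace hc : g • γ = γ := hc
      simp only [Set.mem_compl_iff, Set.mem_insert_iff, Set.mem_singleton_iff, not_or]
      constructor
      · show g • β ≠ α
        intro h; exact hαβ (hinj g α β (ha.trans h.symm))
      · show g • β ≠ γ
        intro h; exact hβγ (hinj g γ β (hc.trans h.symm)).symm
    · intro hy
      simp only [Set.mem_compl_iff, Set.mem_insert_iff, Set.mem_singleton_iff, not_or] at hy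
      obtain ⟨g, hg1, hg2, hg3⟩ := h3t α β γ α y γ hαβ hαγ hβγ (Ne.symm hy.1)
        hαγ hy.2
      exact ⟨⟨g, Subgroup.mem_inf.mpr ⟨hg1, hg3⟩⟩, hg2⟩
  have horb5 : MulAction.orbit (G₁ ⊓ G₂ : Subgroup G) β = ({β, γ} : Set Ω) := by
    ext y
    constructor
    · rintro ⟨⟨g, hg⟩, rfl⟩
      obtain ⟨hg1, hg2⟩ := Subgroup.mem_inf.mp hg
      replace hg2 : g • α = α := by rw [h₂] at hg2; exact hg2
      have hb : g • β ∈ ({α, β, γ} : Set Ω) := hfwd _ g (h₁ ▸ hg1) β (by simp)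
      simp only [Set.mem_insert_iff, Set.mem_singleton_iff] at hb ⊢
      rcases hb with h | h | h
      · exact absurd (hinj g β α (h.trans hg2.symm)) (Ne.symm hαβ)
      · exact Or.inl h
      · exact Or.inr h
    · intro hy
      simp only [Set.mem_insert_iff, Set.mem_singleton_iff] at hy
      rcases hy with hEq | hEq <;> rw [hEq]
      · exact MulAction.mem_orbit_self β
      · obtain ⟨g, hg1, hg2, hg3⟩ := h3t α β γ α γ β hαβ hαγ hβγ hαγ hαβ (Ne.symm hβγ)
        refine ⟨⟨g, Subgroup.mem_inf.mpr ⟨hstab3 g α γ β hg1 hg2 hg3 (by ext t; simp; tauto),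
          by rw [h₂]; exact hg1⟩⟩, hg2⟩
  have horb6 : MulAction.orbit (G₁ ⊓ G₃ : Subgroup G) α = ({α, β} : Set Ω) := by
    ext y
    constructor
    · rintro ⟨⟨g, hg⟩, rfl⟩
      obtain ⟨_, hg3⟩ := Subgroup.mem_inf.mp hg
      exact hfwd _ g (h₃ ▸ hg3) α (by simp)
    · intro hy
      simp only [Set.mem_insert_iff, Set.mem_singleton_iff] at hy
      rcases hy with hEq | hEq <;> rw [hEq]
      · exact MulAction.mem_orbit_self α
      · obtain ⟨g, hg1, hg2, hg3⟩ := h3t α β γ β α γ hαβ hαγ hβγ (Ne.symm hαβ) hβγ hαγ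
        refine ⟨⟨g, Subgroup.mem_inf.mpr ⟨hstab3 g β α γ hg1 hg2 hg3 (by ext t; simp; tauto),
          by rw [h₃]; exact hstab2 g α β β α hg1 hg2 (by ext t; simp; tauto)⟩⟩, hg1⟩
  have horb7 : MulAction.orbit (G₁ ⊓ G₄ : Subgroup G) α = ({α, γ} : Set Ω) := by
    ext y
    constructor
    · rintro ⟨⟨g, hg⟩, rfl⟩
      obtain ⟨_, hg4⟩ := Subgroup.mem_inf.mp hg
      exact hfwd _ g (h₄ ▸ hg4) α (by simp)
    · intro hy
      simp only [Set.mem_insert_iff, Set.mem_singleton_iff] at hy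
      rcases hy with hEq | hEq <;> rw [hEq]
      · exact MulAction.mem_orbit_self α
      · obtain ⟨g, hg1, hg2, hg3⟩ := h3t α β γ γ β α hαβ hαγ hβγ (Ne.symm hβγ)
          (Ne.symm hαγ) (Ne.symm hαβ)
        refine ⟨⟨g, Subgroup.mem_inf.mpr ⟨hstab3 g γ β α hg1 hg2 hg3 (by ext t; simp; tauto),
          by rw [h₄]; exact hstab2 g α γ γ α hg1 hg3 (by ext t; simp; tauto)⟩⟩, hg1⟩
  -- stabilizer-within identities
  have F1 : (G₁ ⊓ G₂ : Subgroup G) ⊓ MulAction.stabilizer G β = K := by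
    ext g
    constructor
    · intro hg
      obtain ⟨hg12, hgβ⟩ := Subgroup.mem_inf.mp hg
      obtain ⟨hg1, hg2⟩ := Subgroup.mem_inf.mp hg12
      replace hg2 : g • α = α := by rw [h₂] at hg2; exact hg2
      replace hgβ : g • β = β := hgβ
      rw [h₁] at hg1
      have hc : g • γ ∈ ({α, β, γ} : Set Ω) := hfwd _ g hg1 γ (by simp)
      simp only [Set.mem_insert_iff, Set.mem_singleton_iff] at hc
      have hgγ : g • γ = γ := by
        rcases hc with h | h | h
        · exact absurd (hinj g γ α (h.trans hg2.symm)) (Ne.symm hαγ)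
        · exact absurd (hinj g γ β (h.trans hgβ.symm)) (Ne.symm hβγ)
        · exact h
      exact (hKmem g).mpr ⟨hg2, hgβ, hgγ⟩
    · intro hg
      have h' := (hKmem g).mp hg
      exact Subgroup.mem_inf.mpr ⟨Subgroup.mem_inf.mpr ⟨hKG₁ g hg,
        by rw [h₂]; exact h'.1⟩, h'.2.1⟩
  have F2 : (G₁ ⊓ G₃ : Subgroup G) ⊓ MulAction.stabilizer G α = K := by
    ext g
    constructor
    · intro hg
      obtain ⟨hg13, hgα⟩ := Subgroup.mem_inf.mp hg
      obtain ⟨hg1, hg3⟩ := Subgroup.mem_inf.mp hg13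
      replace hgα : g • α = α := hgα
      rw [h₃] at hg3
      have hb : g • β ∈ ({α, β} : Set Ω) := hfwd _ g hg3 β (by simp)
      simp only [Set.mem_insert_iff, Set.mem_singleton_iff] at hb
      have hgβ : g • β = β := by
        rcases hb with h | h
        · exact absurd (hinj g β α (h.trans hgα.symm)) (Ne.symm hαβ)
        · exact h
      rw [h₁] at hg1
      have hc : g • γ ∈ ({α, β, γ} : Set Ω) := hfwd _ g hg1 γ (by simp)
      simp only [Set.mem_insert_iff, Set.mem_singleton_iff] at hc
      have hgγ : g • γ = γ := by
        rcases hc with h | h | h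
        · exact absurd (hinj g γ α (h.trans hgα.symm)) (Ne.symm hαγ)
        · exact absurd (hinj g γ β (h.trans hgβ.symm)) (Ne.symm hβγ)
        · exact h
      exact (hKmem g).mpr ⟨hgα, hgβ, hgγ⟩
    · intro hg
      have h' := (hKmem g).mp hg
      exact Subgroup.mem_inf.mpr ⟨Subgroup.mem_inf.mpr ⟨hKG₁ g hg,
        hmemab g h'.1 h'.2.1⟩, h'.1⟩
  have F3 : (G₁ ⊓ G₄ : Subgroup G) ⊓ MulAction.stabilizer G α = K := by
    ext g
    constructor
    · intro hg
      obtain ⟨hg14, hgα⟩ := Subgroup.mem_inf.mp hg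
      obtain ⟨hg1, hg4⟩ := Subgroup.mem_inf.mp hg14
      replace hgα : g • α = α := hgα
      rw [h₄] at hg4
      have hc : g • γ ∈ ({α, γ} : Set Ω) := hfwd _ g hg4 γ (by simp)
      simp only [Set.mem_insert_iff, Set.mem_singleton_iff] at hc
      have hgγ : g • γ = γ := by
        rcases hc with h | h
        · exact absurd (hinj g γ α (h.trans hgα.symm)) (Ne.symm hαγ)
        · exact h
      rw [h₁] at hg1
      have hb : g • β ∈ ({α, β, γ} : Set Ω) := hfwd _ g hg1 β (by simp)
      simp only [Set.mem_insert_iff, Set.mem_singleton_iff] at hb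
      have hgβ : g • β = β := by
        rcases hb with h | h | h
        · exact absurd (hinj g β α (h.trans hgα.symm)) (Ne.symm hαβ)
        · exact h
        · exact absurd (hinj g β γ (h.trans hgγ.symm)) hβγ
      exact (hKmem g).mpr ⟨hgα, hgβ, hgγ⟩
    · intro hg
      have h' := (hKmem g).mp hg
      exact Subgroup.mem_inf.mpr ⟨Subgroup.mem_inf.mpr ⟨hKG₁ g hg,
        hmemac g h'.1 h'.2.2⟩, h'.1⟩
  have F4 : Sab ⊓ MulAction.stabilizer G γ = K := hK.symm
  have F5 : Sac ⊓ MulAction.stabilizer G β = K := by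
    ext g
    simp only [hSac, hK, hSab, Subgroup.mem_inf]
    tauto
  have F6 : G₂ ⊓ MulAction.stabilizer G β = Sab := by rw [h₂, hSab]
  have F7 : G₁ ⊓ MulAction.stabilizer G α = G₁ ⊓ G₂ := by rw [h₂]
  -- cardinalities of the orbit sets
  have hcard3 : Nat.card (({α, β, γ} : Set Ω)) = 3 := by
    rw [Nat.card_coe_set_eq, Set.ncard_insert_of_notMem (by simp [hαβ, hαγ]),
      Set.ncard_pair hβγ]
  have hcardβγ : Nat.card (({β, γ} : Set Ω)) = 2 := by
    rw [Nat.card_coe_set_eq, Set.ncard_pair hβγ]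
  have hcardαβ : Nat.card (({α, β} : Set Ω)) = 2 := by
    rw [Nat.card_coe_set_eq, Set.ncard_pair hαβ]
  have hcardαγ : Nat.card (({α, γ} : Set Ω)) = 2 := by
    rw [Nat.card_coe_set_eq, Set.ncard_pair hαγ]
  have hcardc1 : Nat.card ((({α} : Set Ω)ᶜ : Set Ω)) = n - 1 := by
    rw [Nat.card_coe_set_eq]
    have h5 := Set.ncard_add_ncard_compl ({α} : Set Ω)
    rw [Set.ncard_singleton] at h5
    omega
  have hcardc2 : Nat.card ((({α, β} : Set Ω)ᶜ : Set Ω)) = n - 2 := by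
    rw [Nat.card_coe_set_eq]
    have h5 := Set.ncard_add_ncard_compl ({α, β} : Set Ω)
    rw [Set.ncard_pair hαβ] at h5
    omega
  have hcardc3 : Nat.card ((({α, γ} : Set Ω)ᶜ : Set Ω)) = n - 2 := by
    rw [Nat.card_coe_set_eq]
    have h5 := Set.ncard_add_ncard_compl ({α, γ} : Set Ω)
    rw [Set.ncard_pair hαγ] at h5
    omega
  -- group cardinalities
  set k := Nat.card K with hkdef
  have hk : 0 < k := Nat.card_pos
  have cSab : Nat.card Sab = (n - 2) * k := by
    have h5 := aux_card_eq Sab γ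
    rw [horb3, F4, hcardc2] at h5
    exact h5
  have cSac : Nat.card Sac = (n - 2) * k := by
    have h5 := aux_card_eq Sac β
    rw [horb4, F5, hcardc3] at h5
    exact h5
  have cG2 : Nat.card G₂ = (n - 1) * ((n - 2) * k) := by
    have h5 := aux_card_eq G₂ β
    rw [horb2, F6, hcardc1, cSab] at h5
    exact h5
  have cG12 : Nat.card (G₁ ⊓ G₂ : Subgroup G) = 2 * k := by
    have h5 := aux_card_eq (G₁ ⊓ G₂ : Subgroup G) β
    rw [horb5, F1, hcardβγ] at h5
    exact h5
  have cG13 : Nat.card (G₁ ⊓ G₃ : Subgroup G) = 2 * k := by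
    have h5 := aux_card_eq (G₁ ⊓ G₃ : Subgroup G) α
    rw [horb6, F2, hcardαβ] at h5
    exact h5
  have cG14 : Nat.card (G₁ ⊓ G₄ : Subgroup G) = 2 * k := by
    have h5 := aux_card_eq (G₁ ⊓ G₄ : Subgroup G) α
    rw [horb7, F3, hcardαγ] at h5
    exact h5
  have cG1 : Nat.card G₁ = 3 * (2 * k) := by
    have h5 := aux_card_eq G₁ α
    rw [horb1, F7, hcard3, cG12] at h5
    exact h5
  rw [E1, E2, E3, E4, E5, cG1, cG2, cSab, cSac, cG12, cG13, cG14]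
  obtain ⟨m, hm4, hm1, hm2⟩ : ∃ m, 4 ≤ m ∧ n - 1 = m + 1 ∧ n - 2 = m :=
    ⟨n - 2, by omega, by omega, rfl⟩
  rw [hm1, hm2]
  have hkey : 6 * (m + 1) < 8 * m := by omega
  have hpos : 0 < m * k ^ 5 := Nat.mul_pos (by omega) (pow_pos hk 5)
  calc 3 * (2 * k) * ((m + 1) * (m * k)) * k * k * k
      = (6 * (m + 1)) * (m * k ^ 5) := by ring
    _ < (8 * m) * (m * k ^ 5) := mul_lt_mul_of_pos_right hkey hpos
    _ = 2 * k * (2 * k) * (2 * k) * (m * k) * (m * k) := by ring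
end
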